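/- arXiv:2202.06664 — 11 statements merged into one kernel-verified Lean document; each statement's English description precedes it below -/
import Mathlib

section
/- Let M be a metric space, let m₁,…,m_p, x₀ be distinct points of M, let R = min_i d(x₀,m_i), and let 0 < r < R. Define φ on B(x₀,r) ∪ {m₁,…,m_p} by φ(x) = x₀ for x ∈ B(x₀,r) and φ(m_i) = m_i. Then φ is Lipschitz with constant at most 1 + r/(R−r). -/
open Metric Set

theorem stmt0 {M : Type*} [MetricSpace M] (p : ℕ) (m : Fin (p + 1) → M) (x₀ : M)
    (hm : Function.Injective m) (hmx : ∀ i, m i ≠ x₀)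
    (R r : ℝ) (hR : R = ⨅ i, dist x₀ (m i)) (hr : 0 < r) (hrR : r < R)
    (φ : M → M) (hφ1 : ∀ x ∈ closedBall x₀ r, φ x = x₀) (hφ2 : ∀ i, φ (m i) = m i) :
    ∀ x ∈ closedBall x₀ r ∪ range m, ∀ y ∈ closedBall x₀ r ∪ range m,
      dist (φ x) (φ y) ≤ (1 + r / (R - r)) * dist x y := by
  have hRr : (0:ℝ) < R - r := by linarith
  have hq0 : 0 ≤ r / (R - r) := div_nonneg hr.le hRr.le
  have hq : r / (R - r) * (R - r) = r := div_mul_cancel₀ _ hRr.ne'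
  have hRle : ∀ i, R ≤ dist x₀ (m i) := fun i => hR ▸ ciInf_le (Finite.bddBelow_range _) i
  have key : ∀ x ∈ closedBall x₀ r, ∀ i : Fin (p + 1),
      dist x₀ (m i) ≤ (1 + r / (R - r)) * dist x (m i) := by
    intro x hx i
    rw [mem_closedBall] at hx
    have h1 : dist x₀ (m i) ≤ r + dist x (m i) := by
      calc dist x₀ (m i) ≤ dist x₀ x + dist x (m i) := dist_triangle _ _ _
        _ ≤ r + dist x (m i) := by rw [dist_comm x₀ x]; linarith
    have h2 : R - r ≤ dist x (m i) := by
      have := dist_triangle x₀ x (m i)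
      have hRi := hRle i
      rw [dist_comm x₀ x] at this
      linarith
    nlinarith [mul_le_mul_of_nonneg_left h2 hq0]
  intro x hx y hy
  rcases hx with hx | ⟨i, rfl⟩ <;> rcases hy with hy | ⟨j, rfl⟩
  · rw [hφ1 x hx, hφ1 y hy, dist_self]
    positivity
  · rw [hφ1 x hx, hφ2 j]
    exact key x hx j
  · rw [hφ1 y hy, hφ2 i, dist_comm, dist_comm (m i) y]
    exact key y hy i
  · rw [hφ2 i, hφ2 j]
    nlinarith [dist_nonneg (x := m i) (y := m j)]
end

section
/- Let M be a metric space, x₀ ∈ M, δ > 0, and x, y ∈ M with x ≠ y such that max{ d(x₀,x)/(δ−d(x₀,x)), d(x₀,y)/(δ−d(x₀,y)) } < 1 (in particular d(x₀,x) < δ and d(x₀,y) < δ). Then the map ψ defined on {x₀, x, y} ∪ (M \ B(x₀,δ)) by ψ(x) = x, ψ(y) = y, and ψ(z) = x₀ for all other z in its domain, is 1-Lipschitz. -/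
open Metric Set

theorem stmt1 {M : Type*} [MetricSpace M] (x₀ x y : M) (δ : ℝ) (hδ : 0 < δ)
    (hxy : x ≠ y) (hxδ : dist x₀ x < δ) (hyδ : dist x₀ y < δ)
    (hmax : max (dist x₀ x / (δ - dist x₀ x)) (dist x₀ y / (δ - dist x₀ y)) < 1)
    (ψ : M → M) (hψx : ψ x = x) (hψy : ψ y = y)
    (hψo : ∀ z ∈ insert x₀ (insert x (insert y (univ \ closedBall x₀ δ))),
      z ≠ x → z ≠ y → ψ z = x₀) :
    ∀ a ∈ insert x₀ (insert x (insert y (univ \ closedBall x₀ δ))),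
      ∀ b ∈ insert x₀ (insert x (insert y (univ \ closedBall x₀ δ))),
        dist (ψ a) (ψ b) ≤ dist a b := by
  have hx2 : dist x₀ x < δ - dist x₀ x :=
    (div_lt_one (sub_pos.2 hxδ)).mp ((le_max_left _ _).trans_lt hmax)
  have hy2 : dist x₀ y < δ - dist x₀ y :=
    (div_lt_one (sub_pos.2 hyδ)).mp ((le_max_right _ _).trans_lt hmax)
  have key : ∀ c ∈ insert x₀ (insert x (insert y (univ \ closedBall x₀ δ))),
      c ≠ x → c ≠ y → dist x₀ x ≤ dist c x ∧ dist x₀ y ≤ dist c y := by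
    intro c hc hcx hcy
    rcases hc with rfl | rfl | rfl | hc
    · simp [dist_comm]
    · exact absurd rfl hcx
    · exact absurd rfl hcy
    · have hd : δ < dist c x₀ := by
        simpa [mem_closedBall] using hc.2
      constructor
      · have h1 := dist_triangle c x x₀
        have h2 : dist x x₀ = dist x₀ x := dist_comm _ _
        linarith
      · have h1 := dist_triangle c y x₀
        have h2 : dist y x₀ = dist x₀ y := dist_comm _ _
        linarith
  intro a ha b hb
  by_cases hax : a = x
  · subst hax
    by_cases hbx : b = a
    · subst hbx; simp
    · by_cases hby : b = y
      · subst hby; rw [hψx, hψy]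
      · rw [hψx, hψo b hb hbx hby, dist_comm a x₀, dist_comm a b]
        exact (key b hb hbx hby).1
  · by_cases hay : a = y
    · subst hay
      by_cases hbx : b = x
      · subst hbx; rw [hψx, hψy]
      · by_cases hby : b = a
        · subst hby; simp
        · rw [hψy, hψo b hb hbx hby, dist_comm a x₀, dist_comm a b]
          exact (key b hb hbx hby).2
    · rw [hψo a ha hax hay]
      by_cases hbx : b = x
      · subst hbx; rw [hψx]
        exact (key a ha hax hay).1
      · by_cases hby : b = y
        · subst hby; rw [hψy]
          exact (key a ha hax hay).2
        · rw [hψo b hb hbx hby]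
          simp [dist_nonneg]
end

section
/- Let M be a geodesic metric space, X a Banach space (or normed space), and f, g : M → X Lipschitz with Lipschitz constants at most 1. Suppose there exist m ∈ M and 0 < δ < R such that g is constant on the closed ball B(m,R) and f(x) = f(m) for all x ∉ B(m,δ). Then f + g is Lipschitz with constant at most 1 + δ/(R−δ). -/
open Metric Set

/-- A metric space is geodesic if any two distinct points are joined by an isometric curve. -/
def IsGeodesicSpace (M : Type*) [MetricSpace M] : Prop :=
  ∀ x y : M, x ≠ y → ∃ α : ℝ → M, α 0 = x ∧ α (dist x y) = y ∧
    ∀ s ∈ Set.Icc (0 : ℝ) (dist x y), ∀ t ∈ Set.Icc (0 : ℝ) (dist x y),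
      dist (α s) (α t) = |s - t|

theorem stmt2 {M X : Type*} [MetricSpace M] [NormedAddCommGroup X] [NormedSpace ℝ X]
    (hM : IsGeodesicSpace M)
    (f g : M → X) (hf : ∀ a b : M, ‖f a - f b‖ ≤ dist a b) (hg : ∀ a b : M, ‖g a - g b‖ ≤ dist a b)
    (m : M) (δ R : ℝ) (hδ : 0 < δ) (hδR : δ < R)
    (hgc : ∀ x ∈ closedBall m R, g x = g m)
    (hfc : ∀ x ∉ closedBall m δ, f x = f m) :
    ∀ a b : M, ‖(f a + g a) - (f b + g b)‖ ≤ (1 + δ / (R - δ)) * dist a b := by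
  have hRδ : 0 < R - δ := by linarith
  have hC0 : 0 ≤ δ / (R - δ) := div_nonneg hδ.le hRδ.le
  -- g-constant case
  have gcase : ∀ a b : M, dist a m ≤ R → dist b m ≤ R →
      ‖(f a + g a) - (f b + g b)‖ ≤ (1 + δ / (R - δ)) * dist a b := by
    intro a b ha hb
    have hga : g a = g m := hgc a (by simpa [mem_closedBall] using ha)
    have hgb : g b = g m := hgc b (by simpa [mem_closedBall] using hb)
    have : (f a + g a) - (f b + g b) = f a - f b := by rw [hga, hgb]; abel
    rw [this]
    calc ‖f a - f b‖ ≤ dist a b := hf a b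
      _ ≤ (1 + δ / (R - δ)) * dist a b := by nlinarith [dist_nonneg (x := a) (y := b)]
  -- f-constant case
  have fcase : ∀ a b : M, δ < dist a m → δ < dist b m →
      ‖(f a + g a) - (f b + g b)‖ ≤ (1 + δ / (R - δ)) * dist a b := by
    intro a b ha hb
    have hfa : f a = f m := hfc a (by simp [mem_closedBall]; linarith)
    have hfb : f b = f m := hfc b (by simp [mem_closedBall]; linarith)
    have : (f a + g a) - (f b + g b) = g a - g b := by rw [hfa, hfb]; abel
    rw [this]
    calc ‖g a - g b‖ ≤ dist a b := hg a b
      _ ≤ (1 + δ / (R - δ)) * dist a b := by nlinarith [dist_nonneg (x := a) (y := b)]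
  -- mixed case: a ∈ B(m,δ), b ∉ B(m,R)
  have key : ∀ a b : M, dist a m ≤ δ → R < dist b m →
      ‖(f a + g a) - (f b + g b)‖ ≤ (1 + δ / (R - δ)) * dist a b := by
    intro a b ha hb
    have hab : R - δ ≤ dist a b := by
      have h1 : dist b m ≤ dist b a + dist a m := dist_triangle b a m
      have h2 : dist a b = dist b a := dist_comm a b
      linarith
    have hfb : f b = f m := hfc b (by simp [mem_closedBall]; linarith)
    have hsplit : (f a + g a) - (f b + g b) = (f a - f m) + (g a - g b) := by
      rw [hfb]; abel
    have hfa : ‖f a - f m‖ ≤ δ := le_trans (hf a m) ha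
    have hδd : δ ≤ δ / (R - δ) * dist a b := by
      rw [div_mul_eq_mul_div, le_div_iff₀ hRδ]
      nlinarith
    calc ‖(f a + g a) - (f b + g b)‖ = ‖(f a - f m) + (g a - g b)‖ := by rw [hsplit]
      _ ≤ ‖f a - f m‖ + ‖g a - g b‖ := norm_add_le _ _
      _ ≤ δ + dist a b := add_le_add hfa (hg a b)
      _ ≤ (1 + δ / (R - δ)) * dist a b := by linarith [hδd]
  intro a b
  by_cases hA : dist a m ≤ R
  · by_cases hB : dist b m ≤ R
    · exact gcase a b hA hB
    · by_cases hAδ : dist a m ≤ δ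
      · exact key a b hAδ (lt_of_not_ge hB)
      · exact fcase a b (lt_of_not_ge hAδ) (by linarith [lt_of_not_ge hB])
  · by_cases hBδ : dist b m ≤ δ
    · have h := key b a hBδ (lt_of_not_ge hA)
      rw [norm_sub_rev, dist_comm] at h
      exact h
    · exact fcase a b (by linarith [lt_of_not_ge hA]) (lt_of_not_ge hBδ)
end

section
/- Let M be a metric space, m ∈ M, and 0 < δ < R. Define f on A := B(m,δ) ∪ (M \ B(m,R)) by f(x) = x for x ∉ B(m,R) and f(x) = m for x ∈ B(m,δ). Then f is Lipschitz on A with constant at most 1 + δ/(R−δ). -/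
open Metric Set

theorem stmt3 {M : Type*} [MetricSpace M] (m : M) (δ R : ℝ) (hδ : 0 < δ) (hδR : δ < R)
    (f : M → M) (hf1 : ∀ x ∉ closedBall m R, f x = x) (hf2 : ∀ x ∈ closedBall m δ, f x = m) :
    ∀ x ∈ closedBall m δ ∪ (univ \ closedBall m R),
      ∀ y ∈ closedBall m δ ∪ (univ \ closedBall m R),
        dist (f x) (f y) ≤ (1 + δ / (R - δ)) * dist x y := by
  have hRδ : 0 < R - δ := by linarith
  have hK : (1:ℝ) ≤ 1 + δ / (R - δ) := by nlinarith [div_pos hδ hRδ]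
  have key : ∀ x ∈ closedBall m δ, ∀ y ∈ univ \ closedBall m R,
      dist (f x) (f y) ≤ (1 + δ / (R - δ)) * dist x y := by
    intro x hx y hy
    rw [hf2 x hx, hf1 y hy.2]
    have hx' : dist x m ≤ δ := mem_closedBall.mp hx
    have hy' : R < dist y m := by
      have := hy.2; simp [mem_closedBall] at this; linarith
    have hxy : R - δ ≤ dist x y := by
      have := dist_triangle y x m
      rw [dist_comm x y]; linarith
    have hδle : δ ≤ δ / (R - δ) * dist x y := by
      rw [div_mul_eq_mul_div, le_div_iff₀ hRδ]
      have : 0 < δ := hδ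
      nlinarith
    calc dist m y ≤ dist m x + dist x y := dist_triangle m x y
      _ ≤ δ + dist x y := by rw [dist_comm m x]; linarith
      _ ≤ δ / (R - δ) * dist x y + dist x y := by linarith
      _ = (1 + δ / (R - δ)) * dist x y := by ring
  intro x hx y hy
  rcases hx with hx | hx <;> rcases hy with hy | hy
  · rw [hf2 x hx, hf2 y hy, dist_self]; positivity
  · exact key x hx y hy
  · rw [dist_comm, dist_comm x y]; exact key y hy x hx
  · rw [hf1 x hx.2, hf1 y hy.2]
    nlinarith [dist_nonneg (x := x) (y := y)]
end

section
/- Let C be a nonempty closed convex subset of a real Hilbert space H. Then C has the contraction-extension property: for every subset N ⊆ C and every Lipschitz map f : N → C with Lipschitz constant L, there exists an extension F : C → C with F|_N = f and Lipschitz constant at most L. -/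
/-!
Extend `f` to all of `H` by Kirszbraun's theorem and compose with the metric projection onto `C`,
which is `1`-Lipschitz and fixes `C` (in particular the values of `f`).

Kirszbraun's theorem follows by Zorn's lemma from the one-point extension: a Lipschitz graph `G`
and a point `x` admit `y` with `dist y b ≤ K * dist x a` for all `(a, b) ∈ G`. For finite `G`,
take `y₀` minimising `max (‖y - b‖² - K² ‖x - a‖²)` over the convex hull of the `b`'s; a minimiser
lies in the convex hull of the active `b`'s, and averaging the Lipschitz inequality over those
with the barycentric weights of `y₀` shows that the minimum is `≤ 0`. For infinite `G`, the
solution sets of the finite subproblems are nonempty, closed, convex and directed, and such a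
family in a Hilbert space has nonempty intersection: the nearest points to `0` of its members
converge, because nearest points in nested convex sets are close once their distances to `0` are.
-/

open Metric Set

open Filter Topology
open scoped NNReal RealInnerProductSpace

theorem nonempty_iInter_of_directed_of_dist_le {X ι : Type*} [PseudoMetricSpace X]
    [CompleteSpace X] {S : ι → Set X} (hdir : Directed (· ⊇ ·) S) (hcl : ∀ i, IsClosed (S i))
    {v : ι → X} (hv : ∀ i, v i ∈ S i) {n : ℕ → ι} {g : ℕ → ℝ} (hg : Tendsto g atTop (𝓝 0))
    (hnear : ∀ k j, S j ⊆ S (n k) → dist (v (n k)) (v j) ≤ g k) : (⋂ i, S i).Nonempty := by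
  have hcauchy : CauchySeq fun k => v (n k) := by
    refine Metric.cauchySeq_iff'.2 fun ε hε => ?_
    obtain ⟨N, hN⟩ := eventually_atTop.1 (hg.eventually (gt_mem_nhds (half_pos hε)))
    refine ⟨N, fun k hk => ?_⟩
    obtain ⟨j, hjk, hjN⟩ := hdir (n k) (n N)
    calc dist (v (n k)) (v (n N)) ≤ dist (v (n k)) (v j) + dist (v (n N)) (v j) :=
          dist_triangle_right _ _ _
      _ ≤ g k + g N := add_le_add (hnear k j hjk) (hnear N j hjN)
      _ < ε / 2 + ε / 2 := add_lt_add (hN k hk) (hN N le_rfl)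
      _ = ε := add_halves ε
  obtain ⟨q, hq⟩ := cauchySeq_tendsto_of_complete hcauchy
  refine ⟨q, mem_iInter.2 fun i => ?_⟩
  choose j hji hjn using fun k => hdir i (n k)
  have hvj : Tendsto (fun k => v (j k)) atTop (𝓝 q) :=
    hq.congr_dist (squeeze_zero (fun _ => dist_nonneg) (fun k => hnear k (j k) (hjn k)) hg)
  exact (hcl i).mem_of_tendsto hvj (Eventually.of_forall fun k => hji k (hv (j k)))

section Kirszbraun

variable {E F : Type*} [NormedAddCommGroup E] [InnerProductSpace ℝ E]
  [NormedAddCommGroup F] [InnerProductSpace ℝ F]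

theorem exists_nearest_point {S : Set F} (hne : S.Nonempty) (hS : IsComplete S)
    (hconv : Convex ℝ S) (p : F) :
    ∃ v ∈ S, dist p v = infDist p S ∧ ∀ w ∈ S, ⟪p - v, w - v⟫ ≤ 0 := by
  obtain ⟨v, hvS, hv⟩ := exists_norm_eq_iInf_of_complete_convex hne hS hconv p
  refine ⟨v, hvS, ?_, (norm_eq_iInf_iff_real_inner_le_zero hconv hvS).1 hv⟩
  simp only [dist_eq_norm, hv, infDist_eq_iInf]

theorem norm_sub_sq_le_of_inner_le_zero {p v w : F} (h : ⟪p - v, w - v⟫ ≤ 0) :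
    ‖w - v‖ ^ 2 ≤ ‖p - w‖ ^ 2 - ‖p - v‖ ^ 2 := by
  have : p - w = (p - v) - (w - v) := by abel
  rw [this, norm_sub_sq_real (p - v)]
  linarith

theorem norm_sub_smul_sq_lt {a u : F} (hu : u ≠ 0) (h : ‖u‖ ^ 2 ≤ ⟪a, u⟫) {t : ℝ}
    (ht : t ∈ Ioo 0 2) : ‖a - t • u‖ ^ 2 < ‖a‖ ^ 2 := by
  rw [norm_sub_sq_real, real_inner_smul_right, norm_smul, mul_pow, Real.norm_eq_abs, sq_abs]
  have hu' : 0 < ‖u‖ ^ 2 := by positivity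
  nlinarith [mul_pos ht.1 (mul_pos hu' (sub_pos.2 ht.2)), mul_le_mul_of_nonneg_left h ht.1.le]

theorem sum_sum_mul_norm_sub_sq {ι : Type*} (s : Finset ι) {w : ι → ℝ} (hw : ∑ i ∈ s, w i = 1)
    (u : ι → E) (z : E) :
    ∑ i ∈ s, ∑ j ∈ s, w i * w j * ‖u i - u j‖ ^ 2 =
      2 * ∑ i ∈ s, w i * ‖z - u i‖ ^ 2 - 2 * ‖z - ∑ i ∈ s, w i • u i‖ ^ 2 := by
  have hz : z - ∑ i ∈ s, w i • u i = ∑ i ∈ s, w i • (z - u i) := by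
    simp only [smul_sub, Finset.sum_sub_distrib, ← Finset.sum_smul, hw, one_smul]
  have hsq : ‖∑ i ∈ s, w i • (z - u i)‖ ^ 2 =
      ∑ i ∈ s, ∑ j ∈ s, w i * w j * ⟪z - u i, z - u j⟫ := by
    simp only [← real_inner_self_eq_norm_sq, sum_inner, inner_sum, real_inner_smul_left,
      real_inner_smul_right, mul_assoc]
    exact Finset.sum_congr rfl fun i _ => Finset.sum_congr rfl fun j _ => by rw [real_inner_comm]
  have hterm : ∀ i j,
      ‖u i - u j‖ ^ 2 = ‖z - u i‖ ^ 2 - 2 * ⟪z - u i, z - u j⟫ + ‖z - u j‖ ^ 2 := by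
    intro i j
    rw [← norm_sub_sq_real, norm_sub_rev]
    congr 2
    abel
  have hswap : ∑ i ∈ s, ∑ j ∈ s, w i * w j * ‖z - u j‖ ^ 2 = ∑ j ∈ s, w j * ‖z - u j‖ ^ 2 := by
    simp only [mul_assoc, ← Finset.mul_sum, ← Finset.sum_mul, hw, one_mul]
  have htwo : ∑ i ∈ s, ∑ j ∈ s, w i * w j * (2 * ⟪z - u i, z - u j⟫) =
      2 * ∑ i ∈ s, ∑ j ∈ s, w i * w j * ⟪z - u i, z - u j⟫ := by
    simp only [mul_left_comm _ (2 : ℝ), ← Finset.mul_sum]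
  simp only [hz, hsq, hterm, mul_add, mul_sub, Finset.sum_add_distrib, Finset.sum_sub_distrib,
    ← Finset.sum_mul, ← Finset.mul_sum, hw, mul_one, hswap, htwo]
  ring

theorem mem_convexHull_active_of_minimizes_max {ι : Type*} {S : Set F} (hS : Convex ℝ S)
    {T : Finset ι} {b : ι → F} {c : ι → ℝ} (hbS : ∀ i ∈ T, b i ∈ S) {y₀ : F} (hy₀ : y₀ ∈ S)
    {m : ℝ} (hle : ∀ i ∈ T, ‖y₀ - b i‖ ^ 2 - c i ≤ m)
    (hmin : ∀ y ∈ S, ∃ i ∈ T, m ≤ ‖y - b i‖ ^ 2 - c i) :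
    y₀ ∈ convexHull ℝ (b '' ({i ∈ T | ‖y₀ - b i‖ ^ 2 - c i = m} : Finset ι)) := by
  set A := {i ∈ T | ‖y₀ - b i‖ ^ 2 - c i = m}
  have hbD : ∀ i ∈ T, ‖y₀ - b i‖ ^ 2 - c i = m → b i ∈ convexHull ℝ (b '' A) :=
    fun i hi hact => subset_convexHull ℝ _ ⟨i, Finset.mem_filter.2 ⟨hi, hact⟩, rfl⟩
  have hDS : convexHull ℝ (b '' A) ⊆ S :=
    convexHull_min (by rintro _ ⟨i, hi, rfl⟩; exact hbS i (Finset.mem_filter.1 hi).1) hS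
  have hDne : (convexHull ℝ (b '' A)).Nonempty := by
    obtain ⟨i, hi, hmi⟩ := hmin y₀ hy₀
    exact ⟨b i, hbD i hi (le_antisymm (hle i hi) hmi)⟩
  by_contra hy₀D
  obtain ⟨p, hpD, -, hp⟩ := exists_nearest_point hDne
    ((A.finite_toSet.image b).isCompact_convexHull (𝕜 := ℝ)).isComplete
    (convex_convexHull ℝ _) y₀
  set u := y₀ - p with hu_def
  have hu : u ≠ 0 := fun h => hy₀D (by rwa [← sub_eq_zero.1 h] at hpD)
  -- Moving from `y₀` towards `p` strictly decreases every active term, since the active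
  -- centres lie on the far side of the hyperplane through `p` orthogonal to `u`.
  have hdecr : ∀ i ∈ T, ∀ᶠ t in 𝓝[>] (0 : ℝ), ‖y₀ - t • u - b i‖ ^ 2 - c i < m := by
    intro i hi
    by_cases hact : ‖y₀ - b i‖ ^ 2 - c i = m
    · have hinner : ‖u‖ ^ 2 ≤ ⟪y₀ - b i, u⟫ := by
        have h := hp (b i) (hbD i hi hact)
        have : y₀ - b i = u - (b i - p) := by rw [hu_def]; abel
        rw [this, inner_sub_left, real_inner_self_eq_norm_sq, real_inner_comm]
        linarith
      filter_upwards [Ioo_mem_nhdsGT (two_pos : (0 : ℝ) < 2)] with t ht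
      rw [show y₀ - t • u - b i = (y₀ - b i) - t • u by abel]
      linarith [norm_sub_smul_sq_lt hu hinner ht]
    · have hlt : ‖y₀ - b i‖ ^ 2 - c i < m := lt_of_le_of_ne (hle i hi) hact
      have hcont : Continuous fun t : ℝ => ‖y₀ - t • u - b i‖ ^ 2 - c i := by fun_prop
      exact nhdsWithin_le_nhds
        (hcont.continuousAt.eventually_lt continuousAt_const (by simpa using hlt))
  obtain ⟨t, hterms, ht₀, ht₁⟩ :=
    (((Filter.eventually_all_finset T).2 hdecr).and (Ioo_mem_nhdsGT one_pos)).exists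
  have hyt : y₀ - t • u ∈ S := by
    have : y₀ - t • u = (1 - t) • y₀ + t • p := by module
    rw [this]
    exact hS hy₀ (hDS hpD) (by linarith) ht₀.le (by ring)
  obtain ⟨i, hi, hmi⟩ := hmin _ hyt
  exact (hterms i hi).not_ge hmi

theorem nonempty_iInter_of_directed_of_convex [CompleteSpace F] {ι : Type*} {S : ι → Set F}
    (hdir : Directed (· ⊇ ·) S) (hne : ∀ i, (S i).Nonempty) (hcl : ∀ i, IsClosed (S i))
    (hconv : ∀ i, Convex ℝ (S i)) (hbdd : ∃ i, Bornology.IsBounded (S i)) :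
    (⋂ i, S i).Nonempty := by
  obtain ⟨i₀, hi₀⟩ := hbdd
  have : Nonempty ι := ⟨i₀⟩
  choose v hvS hvd hvin using
    fun i => exists_nearest_point (hne i) (hcl i).isComplete (hconv i) 0
  set d := fun i => infDist (0 : F) (S i)
  have hclose : ∀ {i j}, S j ⊆ S i → dist (v i) (v j) ^ 2 ≤ d j ^ 2 - d i ^ 2 := by
    intro i j h
    have := norm_sub_sq_le_of_inner_le_zero (hvin i (v j) (h (hvS j)))
    rwa [← dist_eq_norm, dist_comm, ← dist_eq_norm, hvd, ← dist_eq_norm, hvd] at this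
  have hdbdd : BddAbove (range d) := by
    obtain ⟨R, hR⟩ := hi₀.subset_closedBall 0
    refine ⟨R, forall_mem_range.2 fun j => ?_⟩
    obtain ⟨k, hk₀, hkj⟩ := hdir i₀ j
    calc d j ≤ d k := infDist_le_infDist_of_subset hkj (hne k)
      _ = dist 0 (v k) := (hvd k).symm
      _ ≤ R := by simpa [dist_comm] using hR (hk₀ (hvS k))
  set δ := sSup (range d)
  obtain ⟨u, -, hu_lim, hu_mem⟩ := exists_seq_tendsto_sSup (range_nonempty d) hdbdd
  choose n hn using hu_mem
  set g := fun k => √(δ ^ 2 - u k ^ 2)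
  have hg : Tendsto g atTop (𝓝 0) := by
    have : Tendsto (fun t : ℝ => √(δ ^ 2 - t ^ 2)) (𝓝 δ) (𝓝 0) := by
      simpa using (show Continuous fun t : ℝ => √(δ ^ 2 - t ^ 2) by fun_prop).tendsto δ
    exact this.comp hu_lim
  have hnear : ∀ k j, S j ⊆ S (n k) → dist (v (n k)) (v j) ≤ g k := by
    intro k j h
    refine Real.le_sqrt_of_sq_le ?_
    have hdj : d j ≤ δ := le_csSup hdbdd (mem_range_self j)
    have := hclose h
    rw [hn k] at this
    nlinarith [infDist_nonneg (x := (0 : F)) (s := S j)]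
  exact nonempty_iInter_of_directed_of_dist_le hdir hcl hvS hg hnear

section LipschitzGraph

variable {α β : Type*} [PseudoMetricSpace α] [PseudoMetricSpace β]

def IsLipschitzGraph (K : ℝ≥0) (G : Set (α × β)) : Prop :=
  ∀ p ∈ G, ∀ q ∈ G, dist p.2 q.2 ≤ K * dist p.1 q.1

variable {K : ℝ≥0} {G : Set (α × β)}

namespace IsLipschitzGraph

theorem mono {G' : Set (α × β)} (hG : IsLipschitzGraph K G) (h : G' ⊆ G) :
    IsLipschitzGraph K G' :=
  fun p hp q hq => hG p (h hp) q (h hq)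

theorem insert (hG : IsLipschitzGraph K G) {x : α} {y : β}
    (hy : ∀ e ∈ G, dist y e.2 ≤ K * dist x e.1) : IsLipschitzGraph K (insert (x, y) G) := by
  rintro p (rfl | hp) q (rfl | hq)
  · simp
  · exact hy q hq
  · rw [dist_comm, dist_comm p.1]
    exact hy p hp
  · exact hG p hp q hq

end IsLipschitzGraph

end LipschitzGraph

namespace IsLipschitzGraph

variable {K : ℝ≥0}

theorem nonpos_of_mem_convexHull {A : Finset (E × F)}
    (hA : IsLipschitzGraph K (A : Set (E × F))) {x : E} {y : F} {m : ℝ}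
    (hy : y ∈ convexHull ℝ (Prod.snd '' (A : Set (E × F))))
    (hm : ∀ e ∈ A, ‖y - e.2‖ ^ 2 = m + K ^ 2 * ‖x - e.1‖ ^ 2) : m ≤ 0 := by
  obtain ⟨z, hz, rfl⟩ : y ∈ LinearMap.snd ℝ E F '' convexHull ℝ A := by
    rwa [LinearMap.image_convexHull]
  obtain ⟨w, hw₀, hw₁, rfl⟩ := Finset.mem_convexHull'.1 hz
  simp only [LinearMap.snd_apply, Prod.snd_sum, Prod.smul_snd] at hm ⊢
  have hlip : ∀ e ∈ A, ∀ e' ∈ A, ‖e.2 - e'.2‖ ^ 2 ≤ K ^ 2 * ‖e.1 - e'.1‖ ^ 2 := by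
    intro e he e' he'
    rw [← mul_pow, ← dist_eq_norm, ← dist_eq_norm]
    exact pow_le_pow_left₀ dist_nonneg (hA e he e' he') 2
  have hsum : ∑ e ∈ A, w e * ‖∑ e' ∈ A, w e' • e'.2 - e.2‖ ^ 2 =
      m + K ^ 2 * ∑ e ∈ A, w e * ‖x - e.1‖ ^ 2 := by
    rw [Finset.sum_congr rfl fun e he => by rw [hm e he]]
    simp only [mul_add, Finset.sum_add_distrib, ← Finset.sum_mul, hw₁, one_mul, Finset.mul_sum,
      mul_left_comm (w _)]
  have hF := sum_sum_mul_norm_sub_sq A hw₁ Prod.snd (∑ e ∈ A, w e • e.2)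
  have hE := sum_sum_mul_norm_sub_sq A hw₁ Prod.fst x
  rw [sub_self, norm_zero, hsum] at hF
  have hcompare : ∑ e ∈ A, ∑ e' ∈ A, w e * w e' * ‖e.2 - e'.2‖ ^ 2 ≤
      K ^ 2 * ∑ e ∈ A, ∑ e' ∈ A, w e * w e' * ‖e.1 - e'.1‖ ^ 2 := by
    simp only [Finset.mul_sum]
    refine Finset.sum_le_sum fun e he => Finset.sum_le_sum fun e' he' => ?_
    nlinarith [hlip e he e' he', mul_nonneg (hw₀ e he) (hw₀ e' he')]
  nlinarith [sq_nonneg (K : ℝ), sq_nonneg ‖x - ∑ e ∈ A, w e • e.1‖]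

theorem exists_forall_dist_le_of_finset {T : Finset (E × F)}
    (hT : IsLipschitzGraph K (T : Set (E × F))) (x : E) :
    ∃ y, ∀ e ∈ T, dist y e.2 ≤ K * dist x e.1 := by
  rcases T.eq_empty_or_nonempty with rfl | hTne
  · exact ⟨0, by simp⟩
  set φ : F → ℝ := fun y => T.sup' hTne fun e => ‖y - e.2‖ ^ 2 - K ^ 2 * ‖x - e.1‖ ^ 2
  have hφ : Continuous φ := Continuous.finset_sup'_apply hTne fun e _ => by fun_prop
  obtain ⟨y₀, hy₀S, hmin⟩ := ((T.finite_toSet.image Prod.snd).isCompact_convexHull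
    (𝕜 := ℝ)).exists_isMinOn (hTne.to_set.image Prod.snd).convexHull hφ.continuousOn
  have hle : ∀ e ∈ T, ‖y₀ - e.2‖ ^ 2 - K ^ 2 * ‖x - e.1‖ ^ 2 ≤ φ y₀ :=
    fun e he => Finset.le_sup' (fun e => ‖y₀ - e.2‖ ^ 2 - K ^ 2 * ‖x - e.1‖ ^ 2) he
  have hloc := mem_convexHull_active_of_minimizes_max (convex_convexHull ℝ _) (b := Prod.snd)
    (c := fun e => K ^ 2 * ‖x - e.1‖ ^ 2)
    (fun e he => subset_convexHull ℝ _ (mem_image_of_mem _ he)) hy₀S hle fun y hy => by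
      obtain ⟨e, he, hφe⟩ := Finset.exists_mem_eq_sup' hTne
        (fun e => ‖y - e.2‖ ^ 2 - K ^ 2 * ‖x - e.1‖ ^ 2)
      exact ⟨e, he, hφe ▸ hmin hy⟩
  have hφ₀ : φ y₀ ≤ 0 :=
    (hT.mono (Finset.coe_subset.2 (Finset.filter_subset _ _))).nonpos_of_mem_convexHull hloc
      fun e he => by linarith [(Finset.mem_filter.1 he).2]
  refine ⟨y₀, fun e he => ?_⟩
  rw [dist_eq_norm, dist_eq_norm]
  refine pow_le_pow_iff_left₀ (norm_nonneg _) (by positivity) two_ne_zero |>.1 ?_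
  linarith [hle e he, mul_pow (K : ℝ) ‖x - e.1‖ 2]

variable [CompleteSpace F] {G : Set (E × F)}

theorem exists_forall_dist_le (hG : IsLipschitzGraph K G) (x : E) :
    ∃ y, ∀ e ∈ G, dist y e.2 ≤ K * dist x e.1 := by
  classical
  rcases G.eq_empty_or_nonempty with rfl | ⟨e₀, he₀⟩
  · exact ⟨0, by simp⟩
  let B : {T : Finset (E × F) // ↑T ⊆ G} → Set F :=
    fun T => ⋂ e ∈ T.1, closedBall e.2 (K * dist x e.1)
  have hB : ∀ T y, y ∈ B T ↔ ∀ e ∈ T.1, dist y e.2 ≤ K * dist x e.1 := by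
    simp [B]
  obtain ⟨y, hy⟩ : (⋂ T, B T).Nonempty := by
    refine nonempty_iInter_of_directed_of_convex (fun T T' => ?_) (fun T => ?_)
      (fun T => isClosed_biInter fun e _ => isClosed_closedBall)
      (fun T => convex_iInter₂ fun e _ => convex_closedBall _ _)
      ⟨⟨{e₀}, by simpa⟩, by simpa [B] using isBounded_closedBall⟩
    · refine ⟨⟨T.1 ∪ T'.1, by simp [T.2, T'.2]⟩, fun y hy => ?_, fun y hy => ?_⟩ <;>
        simp only [hB, Finset.mem_union] at hy ⊢
      exacts [fun e he => hy e (.inl he), fun e he => hy e (.inr he)]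
    · obtain ⟨y, hy⟩ := (hG.mono T.2).exists_forall_dist_le_of_finset x
      exact ⟨y, (hB T y).2 hy⟩
  exact ⟨y, fun e he =>
    (hB ⟨{e}, by simpa⟩ y).1 (mem_iInter.1 hy _) e (Finset.mem_singleton_self e)⟩

theorem exists_lipschitzWith (hG : IsLipschitzGraph K G) :
    ∃ g : E → F, LipschitzWith K g ∧ ∀ e ∈ G, g e.1 = e.2 := by
  have hchain : ∀ c ⊆ {M : Set (E × F) | IsLipschitzGraph K M}, IsChain (· ⊆ ·) c →
      c.Nonempty → ∃ ub ∈ {M | IsLipschitzGraph K M}, ∀ s ∈ c, s ⊆ ub := by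
    refine fun c hc hc' _ => ⟨⋃₀ c, ?_, fun s => subset_sUnion_of_mem⟩
    rintro p ⟨s, hs, hps⟩ q ⟨s', hs', hqs'⟩
    rcases hc'.total hs hs' with h | h
    exacts [hc hs' p (h hps) q hqs', hc hs p hps q (h hqs')]
  obtain ⟨M, hGM, hM⟩ := zorn_subset_nonempty _ hchain G hG
  have htotal : ∀ x, ∃ y, (x, y) ∈ M := fun x =>
    (hM.prop.exists_forall_dist_le x).imp fun y hy => hM.mem_of_prop_insert (hM.prop.insert hy)
  choose g hg using htotal
  refine ⟨g, LipschitzWith.of_dist_le_mul fun a b => hM.prop _ (hg a) _ (hg b), fun e he => ?_⟩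
  simpa using hM.prop _ (hg e.1) _ (hGM he)

end IsLipschitzGraph

theorem LipschitzOnWith.kirszbraun [CompleteSpace F] {K : ℝ≥0} {s : Set E} {f : E → F}
    (hf : LipschitzOnWith K f s) : ∃ g : E → F, LipschitzWith K g ∧ EqOn f g s := by
  have hG : IsLipschitzGraph K ((fun a => (a, f a)) '' s) := by
    rintro _ ⟨a, ha, rfl⟩ _ ⟨b, hb, rfl⟩
    exact hf.dist_le_mul a ha b hb
  obtain ⟨g, hg, hgf⟩ := hG.exists_lipschitzWith
  exact ⟨g, hg, fun a ha => (hgf _ ⟨a, ha, rfl⟩).symm⟩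

theorem Convex.exists_lipschitzWith_one_retraction [CompleteSpace F] {C : Set F}
    (hC : Convex ℝ C) (hclosed : IsClosed C) (hne : C.Nonempty) :
    ∃ r : F → F, LipschitzWith 1 r ∧ (∀ x, r x ∈ C) ∧ ∀ x ∈ C, r x = x := by
  choose r hrC hrd hr using fun x => exists_nearest_point hne hclosed.isComplete hC x
  refine ⟨r, LipschitzWith.mk_one fun x y => ?_, hrC, fun x hx => ?_⟩
  · have hx := hr x (r y) (hrC y)
    have hy := hr y (r x) (hrC x)
    -- the sum of the variational inequalities at `x` and `y`
    have hsq : ‖r x - r y‖ ^ 2 ≤ ⟪x - y, r x - r y⟫ := by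
      have : x - y = (r x - r y) + ((x - r x) - (y - r y)) := by abel
      rw [this, inner_add_left, real_inner_self_eq_norm_sq, inner_sub_left]
      rw [← neg_sub (r x) (r y), inner_neg_right] at hx
      linarith
    rw [dist_eq_norm, dist_eq_norm]
    nlinarith [real_inner_le_norm (x - y) (r x - r y), norm_nonneg (r x - r y),
      norm_nonneg (x - y)]
  · simpa [infDist_zero_of_mem hx, eq_comm] using hrd x

end Kirszbraun

theorem stmt7_general {H : Type*} [NormedAddCommGroup H] [InnerProductSpace ℝ H] [CompleteSpace H]
    (C : Set H) (hC : Convex ℝ C) (hclosed : IsClosed C) (hne : C.Nonempty)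
    (N : Set H) (f : H → H) (hfC : ∀ a ∈ N, f a ∈ C)
    (L : ℝ) (hL : 0 ≤ L) (hf : ∀ a ∈ N, ∀ b ∈ N, dist (f a) (f b) ≤ L * dist a b) :
    ∃ F : H → H, (∀ a ∈ N, F a = f a) ∧ (∀ a ∈ C, F a ∈ C) ∧
      ∀ a ∈ C, ∀ b ∈ C, dist (F a) (F b) ≤ L * dist a b := by
  obtain ⟨g, hg, hgf⟩ := LipschitzOnWith.kirszbraun (K := L.toNNReal)
    (LipschitzOnWith.of_dist_le_mul (by simpa [hL] using hf))
  obtain ⟨r, hr, hrC, hrfix⟩ := hC.exists_lipschitzWith_one_retraction hclosed hne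
  refine ⟨r ∘ g, fun a ha => ?_, fun a _ => hrC (g a), fun a _ b _ => ?_⟩
  · rw [Function.comp_apply, ← hgf ha, hrfix _ (hfC a ha)]
  · simpa [hL] using (hr.comp hg).dist_le_mul a b

theorem stmt7 {H : Type*} [NormedAddCommGroup H] [InnerProductSpace ℝ H] [CompleteSpace H]
    (C : Set H) (hC : Convex ℝ C) (hclosed : IsClosed C) (hne : C.Nonempty)
    (N : Set H) (hN : N ⊆ C) (f : H → H) (hfC : ∀ a ∈ N, f a ∈ C)
    (L : ℝ) (hL : 0 ≤ L) (hf : ∀ a ∈ N, ∀ b ∈ N, dist (f a) (f b) ≤ L * dist a b) :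
    ∃ F : H → H, (∀ a ∈ N, F a = f a) ∧ (∀ a ∈ C, F a ∈ C) ∧
      ∀ a ∈ C, ∀ b ∈ C, dist (F a) (F b) ≤ L * dist a b :=
  stmt7_general C hC hclosed hne N f hfC L hL hf
end

section
/- Let M be a length subset of a Hilbert space H (i.e., for all x ≠ y in M, d(x,y) equals the infimum of lengths of rectifiable curves in M joining them). If M is closed, then M is convex. -/
/-!
Let `d = dist x y` and `p = a • x + b • y` with `a + b = 1`. A curve in `M` from `x` to `y` of
length less than `d + δ` passes, by the intermediate value theorem, through a point `z` with
`dist x z = b * d`, and then `dist z y < a * d + δ`. In an inner product space the identity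
`‖p - z‖² = a ‖x - z‖² + b ‖y - z‖² - a b ‖x - y‖²` turns these two distance bounds into
`dist p z ^ 2 ≤ δ * (d + δ)`. As `δ → 0`, `p` lies in the closure of `M`, which is `M`.
-/

open Metric Set Filter Topology

lemma eVariationOn.edist_add_edist_le {α E : Type*} [LinearOrder α] [PseudoEMetricSpace E]
    (f : α → E) {a s b : α} (has : a ≤ s) (hsb : s ≤ b) :
    edist (f a) (f s) + edist (f s) (f b) ≤ eVariationOn f (Icc a b) :=
  calc edist (f a) (f s) + edist (f s) (f b)
      ≤ eVariationOn f (Icc a s) + eVariationOn f (Icc s b) :=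
        add_le_add (eVariationOn.edist_le f (left_mem_Icc.2 has) (right_mem_Icc.2 has))
          (eVariationOn.edist_le f (left_mem_Icc.2 hsb) (right_mem_Icc.2 hsb))
    _ ≤ eVariationOn f (Icc a s ∪ Icc s b) :=
        eVariationOn.add_le_union f fun _ hx _ hy ↦ hx.2.trans hy.1
    _ = eVariationOn f (Icc a b) := by rw [Icc_union_Icc_eq_Icc has hsb]

lemma exists_dist_eq_dist_lt_of_eVariationOn_lt {E : Type*} [PseudoMetricSpace E]
    {γ : ℝ → E} (hγ : ContinuousOn γ (Icc 0 1)) {L r : ℝ}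
    (hL : eVariationOn γ (Icc 0 1) < ENNReal.ofReal L) (hr₀ : 0 ≤ r) (hr : r ≤ dist (γ 0) (γ 1)) :
    ∃ s ∈ Icc (0 : ℝ) 1, dist (γ 0) (γ s) = r ∧ dist (γ s) (γ 1) < L - r := by
  have hdist : ContinuousOn (fun s ↦ dist (γ 0) (γ s)) (Icc 0 1) :=
    (continuous_const.dist continuous_id).comp_continuousOn hγ
  obtain ⟨s, hs, hsr : dist (γ 0) (γ s) = r⟩ :=
    intermediate_value_Icc zero_le_one hdist ⟨by simpa using hr₀, hr⟩
  refine ⟨s, hs, hsr, ?_⟩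
  have hsum : ENNReal.ofReal (dist (γ 0) (γ s) + dist (γ s) (γ 1)) < ENNReal.ofReal L := by
    rw [ENNReal.ofReal_add dist_nonneg dist_nonneg, ← edist_dist, ← edist_dist]
    exact (eVariationOn.edist_add_edist_le γ hs.1 hs.2).trans_lt hL
  have := (ENNReal.ofReal_lt_ofReal_iff_of_nonneg (by positivity)).1 hsum
  linarith

section InnerProductSpace

variable {E : Type*} [NormedAddCommGroup E] [InnerProductSpace ℝ E]

lemma norm_smul_add_smul_sq {a b : ℝ} (hab : a + b = 1) (u v : E) :
    ‖a • u + b • v‖ ^ 2 = a * ‖u‖ ^ 2 + b * ‖v‖ ^ 2 - a * b * ‖u - v‖ ^ 2 := by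
  rw [norm_add_sq_real, norm_sub_sq_real, norm_smul, norm_smul, real_inner_smul_left,
    real_inner_smul_right, mul_pow, mul_pow, Real.norm_eq_abs, Real.norm_eq_abs, sq_abs, sq_abs]
  obtain rfl := eq_sub_of_add_eq hab
  ring

lemma dist_smul_add_smul_sq_le {x y z : E} {a b δ : ℝ} (ha : 0 ≤ a) (hb : 0 ≤ b)
    (hab : a + b = 1) (hδ : 0 ≤ δ) (hxz : dist x z ≤ b * dist x y + δ)
    (hzy : dist z y ≤ a * dist x y + δ) :
    dist (a • x + b • y) z ^ 2 ≤ δ * (dist x y + δ) := by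
  have hcombo : a • x + b • y - z = a • (x - z) + b • (y - z) :=
    calc a • x + b • y - z = a • x + b • y - (a + b) • z := by rw [hab, one_smul]
      _ = a • (x - z) + b • (y - z) := by module
  rw [dist_eq_norm, hcombo, norm_smul_add_smul_sq hab, sub_sub_sub_cancel_right,
    ← dist_eq_norm, ← dist_eq_norm, ← dist_eq_norm, dist_comm y z]
  set d := dist x y
  have h₁ : dist x z ^ 2 ≤ (b * d + δ) ^ 2 := pow_le_pow_left₀ dist_nonneg hxz 2
  have h₂ : dist z y ^ 2 ≤ (a * d + δ) ^ 2 := pow_le_pow_left₀ dist_nonneg hzy 2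
  have hd : 0 ≤ d := dist_nonneg
  have hab4 : 4 * a * b ≤ 1 := by nlinarith [sq_nonneg (a - b)]
  calc a * dist x z ^ 2 + b * dist z y ^ 2 - a * b * d ^ 2
      ≤ a * (b * d + δ) ^ 2 + b * (a * d + δ) ^ 2 - a * b * d ^ 2 := by gcongr
    _ = 4 * a * b * d * δ + δ ^ 2 := by obtain rfl := eq_sub_of_add_eq hab; ring
    _ ≤ δ * (d + δ) := by nlinarith [mul_nonneg hd hδ]

lemma smul_add_smul_mem_closure_of_eVariationOn_lt {M : Set E} {x y : E}
    (hcurve : ∀ δ > 0, ∃ γ : ℝ → E, ContinuousOn γ (Icc 0 1) ∧ (∀ t ∈ Icc (0 : ℝ) 1, γ t ∈ M) ∧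
      γ 0 = x ∧ γ 1 = y ∧ eVariationOn γ (Icc 0 1) < ENNReal.ofReal (dist x y + δ))
    {a b : ℝ} (ha : 0 ≤ a) (hb : 0 ≤ b) (hab : a + b = 1) :
    a • x + b • y ∈ closure M := by
  rw [Metric.mem_closure_iff]
  intro ε hε
  have hcont : Continuous fun δ : ℝ ↦ δ * (dist x y + δ) := by fun_prop
  have hsmall : Tendsto (fun δ : ℝ ↦ δ * (dist x y + δ)) (𝓝[>] 0) (𝓝 0) :=
    (hcont.tendsto' 0 0 (by simp)).mono_left nhdsWithin_le_nhds
  obtain ⟨δ, hδε, hδ⟩ :=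
    ((hsmall.eventually (gt_mem_nhds (pow_pos hε 2))).and self_mem_nhdsWithin).exists
  obtain ⟨γ, hγ, hγM, rfl, rfl, hlen⟩ := hcurve δ hδ
  obtain ⟨s, hs, hxz, hzy⟩ := exists_dist_eq_dist_lt_of_eVariationOn_lt hγ hlen
    (mul_nonneg hb dist_nonneg) (mul_le_of_le_one_left dist_nonneg (by linarith))
  refine ⟨γ s, hγM s hs, lt_of_pow_lt_pow_left₀ 2 hε.le ?_⟩
  have hxz' := hxz.le.trans (le_add_of_nonneg_right hδ.le)
  have hzy' : dist (γ s) (γ 1) ≤ a * dist (γ 0) (γ 1) + δ := by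
    linarith [congrArg (· * dist (γ 0) (γ 1)) hab]
  exact (dist_smul_add_smul_sq_le ha hb hab hδ.le hxz' hzy').trans_lt hδε

end InnerProductSpace

theorem stmt8_general {H : Type*} [NormedAddCommGroup H] [InnerProductSpace ℝ H]
    (M : Set H) (hclosed : IsClosed M)
    (hlength : ∀ x ∈ M, ∀ y ∈ M, x ≠ y →
      ENNReal.ofReal (dist x y) =
        ⨅ (α : ℝ → H) (_ : ContinuousOn α (Set.Icc 0 1))
          (_ : ∀ t ∈ Set.Icc (0 : ℝ) 1, α t ∈ M) (_ : α 0 = x) (_ : α 1 = y),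
          eVariationOn α (Set.Icc 0 1)) :
    Convex ℝ M := by
  rw [convex_iff_pairwise_pos]
  intro x hx y hy hxy a b ha hb hab
  rw [← hclosed.closure_eq]
  refine smul_add_smul_mem_closure_of_eVariationOn_lt (fun δ hδ ↦ ?_) ha.le hb.le hab
  have hlt : ENNReal.ofReal (dist x y) < ENNReal.ofReal (dist x y + δ) :=
    ENNReal.ofReal_lt_ofReal_iff'.2 ⟨by linarith, by positivity⟩
  rw [hlength x hx y hy hxy] at hlt
  simpa only [iInf_lt_iff, exists_prop] using hlt

theorem stmt8 {H : Type*} [NormedAddCommGroup H] [InnerProductSpace ℝ H] [CompleteSpace H]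
    (M : Set H) (hclosed : IsClosed M)
    (hlength : ∀ x ∈ M, ∀ y ∈ M, x ≠ y →
      ENNReal.ofReal (dist x y) =
        ⨅ (α : ℝ → H) (_ : ContinuousOn α (Set.Icc 0 1))
          (_ : ∀ t ∈ Set.Icc (0 : ℝ) 1, α t ∈ M) (_ : α 0 = x) (_ : α 1 = y),
          eVariationOn α (Set.Icc 0 1)) :
    Convex ℝ M :=
  stmt8_general M hclosed hlength
end

section
/- Let M be a complete metric space that is geodesic and has the compact intersection property. Then for every pair of metric spaces Y ⊆ X with X compact (hence Y closed in X compact) and every Lipschitz map f : Y → M, there exists an extension F : X → M with the same Lipschitz constant as f. -/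
open Metric Set

/-- Compact intersection property: any family of pairwise intersecting closed balls whose
set of centers is relatively compact has a common point. -/
def CompactIP (M : Type*) [MetricSpace M] : Prop :=
  ∀ (ι : Type) (c : ι → M) (r : ι → ℝ),
    (∀ i j, (closedBall (c i) (r i) ∩ closedBall (c j) (r j)).Nonempty) →
    IsCompact (closure (Set.range c)) →
    (⋂ i, closedBall (c i) (r i)).Nonempty

/-!
Let `g` be `K`-Lipschitz on a totally bounded set `S` and let `x` be a point. The closed balls
`B(g s, K d(x, s))`, `s ∈ S`, pairwise intersect because `M` is geodesic, and their centers lie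
in the totally bounded set `g '' S`, whose closure is compact since `M` is complete; the compact
intersection property gives a common point, which is a value at `x` keeping `g` `K`-Lipschitz.
Doing this along a dense sequence of the compact space `X` extends `f` to a dense set containing
`Y`; one more application at each remaining point gives a map that is `K`-Lipschitz against the
dense set, hence `K`-Lipschitz on `X`.
-/

open scoped NNReal

theorem TotallyBounded.image_of_uniformContinuousOn {α β : Type*} [UniformSpace α]
    [UniformSpace β] {f : α → β} {s : Set α} (hs : TotallyBounded s)
    (hf : UniformContinuousOn f s) : TotallyBounded (f '' s) := by
  have hs' := totallyBounded_preimage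
    (isUniformEmbedding_subtype_val (p := (· ∈ s))).isUniformInducing hs
  rw [Subtype.coe_preimage_self] at hs'
  rw [← range_domRestrict, ← image_univ]
  exact hs'.image (uniformContinuousOn_iff_restrict.1 hf)

theorem exists_eqOn_of_eqOn_succ {α β : Type*} {T : ℕ → Set α} (hT : Monotone T)
    {G : ℕ → α → β} (hG : ∀ n, EqOn (G (n + 1)) (G n) (T n)) :
    ∃ F : α → β, ∀ n, EqOn F (G n) (T n) := by
  have hGle : ∀ m n, m ≤ n → EqOn (G n) (G m) (T m) := by
    intro m n hmn
    induction n, hmn using Nat.le_induction with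
    | base => exact eqOn_refl _ _
    | succ n hmn ih => exact fun x hx => (hG n (hT hmn hx)).trans (ih hx)
  classical
  refine ⟨fun x => if h : ∃ n, x ∈ T n then G (Nat.find h) x else G 0 x, fun n x hx => ?_⟩
  have h : ∃ n, x ∈ T n := ⟨n, hx⟩
  simp only [dif_pos h]
  exact (hGle _ _ (Nat.find_min' h hx) (Nat.find_spec h)).symm

theorem LipschitzOnWith.iUnion_of_monotone {α β : Type*} [PseudoEMetricSpace α]
    [PseudoEMetricSpace β] {K : ℝ≥0} {f : α → β} {T : ℕ → Set α} (hT : Monotone T)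
    (hf : ∀ n, LipschitzOnWith K f (T n)) : LipschitzOnWith K f (⋃ n, T n) := by
  intro x hx y hy
  obtain ⟨m, hxm⟩ := mem_iUnion.1 hx
  obtain ⟨n, hyn⟩ := mem_iUnion.1 hy
  exact hf (max m n) (hT (le_max_left m n) hxm) (hT (le_max_right m n) hyn)

theorem lipschitzWith_of_dense_of_dist_le {α β : Type*} [PseudoMetricSpace α]
    [PseudoMetricSpace β] {K : ℝ≥0} {F : α → β} {S : Set α} (hS : Dense S)
    (h : ∀ x, ∀ s ∈ S, dist (F x) (F s) ≤ K * dist x s) : LipschitzWith K F := by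
  refine LipschitzWith.of_dist_le_mul fun x y => ?_
  have key : ∀ s ∈ S, dist (F x) (F y) ≤ K * (dist x s + dist y s) := fun s hs =>
    calc dist (F x) (F y) ≤ dist (F x) (F s) + dist (F y) (F s) := dist_triangle_right _ _ _
      _ ≤ K * dist x s + K * dist y s := add_le_add (h x s hs) (h y s hs)
      _ = K * (dist x s + dist y s) := (mul_add _ _ _).symm
  have := continuousWithinAt_const.closure_le (hS x) (by fun_prop) key
  rwa [dist_self, zero_add, dist_comm y] at this

theorem IsGeodesicSpace.closedBall_inter_closedBall_nonempty {M : Type*} [MetricSpace M]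
    (hgeo : IsGeodesicSpace M) {a b : M} {r s : ℝ} (hr : 0 ≤ r) (hs : 0 ≤ s)
    (hab : dist a b ≤ r + s) : (closedBall a r ∩ closedBall b s).Nonempty := by
  rcases eq_or_ne a b with rfl | hne
  · exact ⟨a, mem_closedBall_self hr, mem_closedBall_self hs⟩
  obtain ⟨α, hα0, hαd, hα⟩ := hgeo a b hne
  set d := dist a b
  have ht : min r d ∈ Icc 0 d := ⟨le_min hr dist_nonneg, min_le_right _ _⟩
  refine ⟨α (min r d), ?_, ?_⟩
  · rw [mem_closedBall, ← hα0, hα _ ht 0 ⟨le_rfl, dist_nonneg⟩, sub_zero,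
      abs_of_nonneg ht.1]
    exact min_le_left _ _
  · rw [mem_closedBall, ← hαd, hα _ ht d ⟨dist_nonneg, le_rfl⟩,
      abs_of_nonpos (by linarith [ht.2])]
    rcases min_choice r d with h | h <;> rw [h] <;> linarith

namespace CompactIP

variable {M : Type*} [MetricSpace M]

theorem nonempty (hcip : CompactIP M) : Nonempty M := by
  obtain ⟨x, -⟩ := hcip Empty Empty.elim (fun _ => 0) (fun i => i.elim)
    (by simp only [range_eq_empty, closure_empty, isCompact_empty])
  exact ⟨x⟩

theorem iInter_closedBall_nonempty (hcip : CompactIP M) {ι : Type*} [Countable ι]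
    (c : ι → M) (r : ι → ℝ)
    (hpair : ∀ i j, (closedBall (c i) (r i) ∩ closedBall (c j) (r j)).Nonempty)
    (hc : IsCompact (closure (range c))) : (⋂ i, closedBall (c i) (r i)).Nonempty := by
  obtain ⟨e, he⟩ := Countable.exists_injective_nat ι
  set ψ := (Equiv.ofInjective e he).symm
  have h := hcip (range e) (c ∘ ψ) (r ∘ ψ) (fun i j => hpair _ _)
    (by rwa [ψ.surjective.range_comp])
  rwa [← ψ.surjective.iInter_comp fun i => closedBall (c i) (r i)]

end CompactIP

section Extension

variable {X M : Type*} [MetricSpace X] [MetricSpace M] [CompleteSpace M] {K : ℝ≥0}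

/-- `CompactIP` only speaks of families indexed by a type in `Type`, so it is applied to a
countable dense `D ⊆ S`; the inequality passes from `D` to `S` by continuity of `g` on `S`. -/
theorem exists_dist_le_of_lipschitzOnWith (hgeo : IsGeodesicSpace M) (hcip : CompactIP M)
    {g : X → M} {S : Set X} (hS : TotallyBounded S) (hg : LipschitzOnWith K g S) (x : X) :
    ∃ w, ∀ s ∈ S, dist w (g s) ≤ K * dist x s := by
  obtain ⟨D, hDS, hDc, hSD⟩ := hS.isSeparable.exists_countable_dense_subset
  have : Countable D := hDc.to_subtype
  have hpair : ∀ d e : D, (closedBall (g d) (K * dist x d) ∩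
      closedBall (g e) (K * dist x e)).Nonempty := fun d e =>
    hgeo.closedBall_inter_closedBall_nonempty (by positivity) (by positivity) <|
      calc dist (g d) (g e) ≤ K * dist (d : X) e := hg.dist_le_mul _ (hDS d.2) _ (hDS e.2)
        _ ≤ K * (dist x d + dist x e) := by
          gcongr; exact dist_triangle_left _ _ _
        _ = K * dist x d + K * dist x e := mul_add _ _ _
  have hcpt : IsCompact (closure (range fun d : D => g d)) := by
    rw [← image_eq_range]
    have htb := (hS.subset hDS).image_of_uniformContinuousOn (hg.mono hDS).uniformContinuousOn
    exact htb.closure.isCompact_of_isClosed isClosed_closure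
  obtain ⟨w, hw⟩ := hcip.iInter_closedBall_nonempty _ _ hpair hcpt
  have hwD : ∀ d ∈ D, dist w (g d) ≤ K * dist x d := fun d hd =>
    mem_closedBall.1 (mem_iInter.1 hw ⟨d, hd⟩)
  refine ⟨w, fun s hs => ?_⟩
  have hgs : ContinuousWithinAt g D s := (hg.continuousOn s hs).mono hDS
  exact ContinuousWithinAt.closure_le (hSD hs) (continuousWithinAt_const.dist hgs)
    (by fun_prop) hwD

theorem exists_lipschitzOnWith_insert (hgeo : IsGeodesicSpace M) (hcip : CompactIP M)
    {g : X → M} {S : Set X} (hS : TotallyBounded S) (hg : LipschitzOnWith K g S) (x : X) :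
    ∃ G, EqOn G g S ∧ LipschitzOnWith K G (insert x S) := by
  by_cases hx : x ∈ S
  · exact ⟨g, eqOn_refl _ _, by rwa [insert_eq_of_mem hx]⟩
  classical
  obtain ⟨w, hw⟩ := exists_dist_le_of_lipschitzOnWith hgeo hcip hS hg x
  have hG : EqOn (Function.update g x w) g S := fun s hs =>
    Function.update_of_ne (ne_of_mem_of_not_mem hs hx) _ _
  refine ⟨Function.update g x w, hG, LipschitzOnWith.of_dist_le_mul ?_⟩
  rintro a (rfl | ha) b (rfl | hb)
  · simp
  · rw [Function.update_self, hG hb]; exact hw b hb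
  · rw [Function.update_self, hG ha, dist_comm, dist_comm a]; exact hw a ha
  · rw [hG ha, hG hb]; exact hg.dist_le_mul a ha b hb

theorem exists_lipschitzOnWith_union_range (hgeo : IsGeodesicSpace M) (hcip : CompactIP M)
    {g : X → M} {S : Set X} (q : ℕ → X) (hS : TotallyBounded (S ∪ range q))
    (hg : LipschitzOnWith K g S) : ∃ G, EqOn G g S ∧ LipschitzOnWith K G (S ∪ range q) := by
  have := hcip.nonempty
  set T : ℕ → Set X := fun n => S ∪ q '' Iio n
  have hT : Monotone T := fun m n hmn =>
    union_subset_union_right _ (image_mono (Iio_subset_Iio hmn))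
  have hT_succ : ∀ n, T (n + 1) ⊆ insert (q n) (T n) := by
    rintro n x (hx | ⟨m, hm, rfl⟩)
    · exact Or.inr (Or.inl hx)
    · rcases (Nat.lt_succ_iff_lt_or_eq.1 hm) with hm | rfl
      · exact Or.inr (Or.inr ⟨m, hm, rfl⟩)
      · exact Or.inl rfl
  have hT_tb : ∀ n, TotallyBounded (T n) := fun n =>
    hS.subset (union_subset_union_right _ (image_subset_range _ _))
  choose! step hstep_eq hstep_lip using fun n (G : X → M) (hG : LipschitzOnWith K G (T n)) =>
    exists_lipschitzOnWith_insert hgeo hcip (hT_tb n) hG (q n)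
  let Gs : ℕ → X → M := fun n => Nat.rec g step n
  have hGs : ∀ n, LipschitzOnWith K (Gs n) (T n) := by
    intro n
    induction n with
    | zero => exact hg.mono (by simp [T])
    | succ n ih => exact (hstep_lip n _ ih).mono (hT_succ n)
  obtain ⟨G, hG⟩ := exists_eqOn_of_eqOn_succ (G := Gs) hT fun n => hstep_eq n _ (hGs n)
  refine ⟨G, fun x hx => hG 0 (Or.inl hx), ?_⟩
  refine (LipschitzOnWith.iUnion_of_monotone hT fun n => ?_).mono ?_
  · exact fun x hx y hy => by rw [hG n hx, hG n hy]; exact hGs n hx hy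
  · rintro x (hx | ⟨n, rfl⟩)
    · exact mem_iUnion.2 ⟨0, Or.inl hx⟩
    · exact mem_iUnion.2 ⟨n + 1, Or.inr ⟨n, Nat.lt_succ_self n, rfl⟩⟩

theorem exists_lipschitzWith_of_dense (hgeo : IsGeodesicSpace M) (hcip : CompactIP M)
    {g : X → M} {S : Set X} (hS : TotallyBounded S) (hdense : Dense S)
    (hg : LipschitzOnWith K g S) : ∃ F, EqOn F g S ∧ LipschitzWith K F := by
  choose w hw using exists_dist_le_of_lipschitzOnWith hgeo hcip hS hg
  classical
  refine ⟨S.piecewise g w, piecewise_eqOn _ _ _, lipschitzWith_of_dense_of_dist_le hdense ?_⟩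
  intro x s hs
  rw [piecewise_eq_of_mem _ _ _ hs]
  by_cases hx : x ∈ S
  · rw [piecewise_eq_of_mem _ _ _ hx]; exact hg.dist_le_mul x hx s hs
  · rw [piecewise_eq_of_notMem _ _ _ hx]; exact hw x s hs

end Extension

theorem stmt9_general {M X : Type*} [MetricSpace M] [CompleteSpace M]
    [MetricSpace X] [CompactSpace X]
    (hgeo : IsGeodesicSpace M) (hcip : CompactIP M)
    (Y : Set X) (f : X → M) (L : ℝ) (hL : 0 ≤ L)
    (hf : ∀ a ∈ Y, ∀ b ∈ Y, dist (f a) (f b) ≤ L * dist a b) :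
    ∃ F : X → M, (∀ a ∈ Y, F a = f a) ∧ ∀ a b : X, dist (F a) (F b) ≤ L * dist a b := by
  cases isEmpty_or_nonempty X
  · exact ⟨f, fun _ _ => rfl, fun a => isEmptyElim a⟩
  have htb : ∀ S : Set X, TotallyBounded S := fun S =>
    isCompact_univ.totallyBounded.subset (subset_univ S)
  have hfK : LipschitzOnWith L.toNNReal f Y :=
    LipschitzOnWith.of_dist_le_mul fun a ha b hb => by
      rw [Real.coe_toNNReal L hL]; exact hf a ha b hb
  set q := TopologicalSpace.denseSeq X
  obtain ⟨G, hGf, hG⟩ := exists_lipschitzOnWith_union_range hgeo hcip q (htb _) hfK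
  obtain ⟨F, hFG, hF⟩ := exists_lipschitzWith_of_dense hgeo hcip (htb _)
    ((TopologicalSpace.denseRange_denseSeq X).mono subset_union_right) hG
  refine ⟨F, fun a ha => (hFG (Or.inl ha)).trans (hGf ha), fun a b => ?_⟩
  simpa [Real.coe_toNNReal L hL] using hF.dist_le_mul a b

theorem stmt9 {M X : Type*} [MetricSpace M] [Nonempty M] [CompleteSpace M]
    [MetricSpace X] [CompactSpace X]
    (hgeo : IsGeodesicSpace M) (hcip : CompactIP M)
    (Y : Set X) (f : X → M) (L : ℝ) (hL : 0 ≤ L)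
    (hf : ∀ a ∈ Y, ∀ b ∈ Y, dist (f a) (f b) ≤ L * dist a b) :
    ∃ F : X → M, (∀ a ∈ Y, F a = f a) ∧ ∀ a b : X, dist (F a) (F b) ≤ L * dist a b :=
  stmt9_general hgeo hcip Y f L hL hf
end

section
/- A Banach space X has the Daugavet property (every rank-one operator T satisfies ‖I + T‖ = 1 + ‖T‖) if and only if for every x in the unit sphere S_X, every slice S = S(B_X, f, α) of the unit ball (with f ∈ S_{X*}, α > 0), and every ε > 0, there exists y ∈ S with ‖x + y‖ > 2 − ε. -/
/-!
For unit vectors `x` and `f`, the operator `I + f ⊗ x` has norm `2` exactly when `B_X` contains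
points `y` with `‖y + f(y) x‖` close to `2`; after replacing `y` by `-y` one may assume
`f(y) ≥ 0`, and then `f(y)` is close to `1` and `‖x + y‖` is close to `2`. Conversely, if
`y` lies in a thin slice `f > 1 - ε` and `‖x + y‖ > 2 - ε`, then `y + c f(y) x` has norm
close to `1 + c`, so `‖I + c f ⊗ x‖ ≥ 1 + c`; a general rank-one operator is of this form after
normalising `f` and `x`.
-/

open Filter Topology

namespace Daugavet

variable {X : Type*} [NormedAddCommGroup X] [NormedSpace ℝ X]

lemma norm_id_add_le (T : X →L[ℝ] X) : ‖ContinuousLinearMap.id ℝ X + T‖ ≤ 1 + ‖T‖ :=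
  (norm_add_le _ _).trans (add_le_add_left ContinuousLinearMap.norm_id_le _)

lemma lt_and_norm_add_gt_of_norm_add_smul_gt {x y : X} {t δ : ℝ} (hx : ‖x‖ ≤ 1) (hy : ‖y‖ ≤ 1)
    (ht₀ : 0 ≤ t) (ht₁ : t ≤ 1) (h : 2 - δ < ‖y + t • x‖) :
    1 - δ < t ∧ 2 - 2 * δ < ‖x + y‖ := by
  have hyx : ‖y + t • x‖ ≤ 1 + t := by
    calc ‖y + t • x‖ ≤ ‖y‖ + t * ‖x‖ := by
          simpa [norm_smul, abs_of_nonneg ht₀] using norm_add_le y (t • x)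
      _ ≤ 1 + t := by nlinarith
  have hxy : ‖y + t • x‖ ≤ ‖x + y‖ + (1 - t) := by
    calc ‖y + t • x‖ = ‖(x + y) - (1 - t) • x‖ := by congr 1; module
      _ ≤ ‖x + y‖ + (1 - t) * ‖x‖ := by
          simpa [norm_smul, abs_of_nonneg (sub_nonneg.2 ht₁)] using
            norm_sub_le (x + y) ((1 - t) • x)
      _ ≤ ‖x + y‖ + (1 - t) := by nlinarith
  constructor <;> linarith

lemma exists_slice_norm_add_gt {x : X} {f : X →L[ℝ] ℝ} (hf : ‖f‖ = 1) (hx : ‖x‖ = 1)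
    (h : ‖ContinuousLinearMap.id ℝ X + f.smulRight x‖ = 2) {δ : ℝ} (hδ : 0 < δ) :
    ∃ y : X, ‖y‖ ≤ 1 ∧ 1 - δ < f y ∧ 2 - 2 * δ < ‖x + y‖ := by
  obtain ⟨z, hz, hz_big⟩ :=
    (ContinuousLinearMap.id ℝ X + f.smulRight x).exists_lt_apply_of_lt_opNorm
      (show 2 - δ < _ by linarith)
  simp only [add_apply, ContinuousLinearMap.id_apply,
    ContinuousLinearMap.smulRight_apply] at hz_big
  -- `z ↦ z + f(z) x` is odd, so we may take `f(z) ≥ 0`.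
  obtain ⟨y, hy, hfy, hy_big⟩ : ∃ y : X, ‖y‖ ≤ 1 ∧ 0 ≤ f y ∧ 2 - δ < ‖y + f y • x‖ := by
    rcases le_total 0 (f z) with hfz | hfz
    · exact ⟨z, hz.le, hfz, hz_big⟩
    · refine ⟨-z, by simpa using hz.le, by simpa using hfz, ?_⟩
      rwa [map_neg, neg_smul, ← neg_add, norm_neg]
  have hfy_le : f y ≤ 1 := by
    simpa [hf] using (le_abs_self (f y)).trans (f.unit_le_opNorm y hy)
  exact ⟨y, hy, lt_and_norm_add_gt_of_norm_add_smul_gt hx.le hy hfy hfy_le hy_big⟩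

lemma mul_one_sub_le_norm_add_smul {x y : X} {s ε : ℝ} (hx : ‖x‖ ≤ 1) (hy : ‖y‖ ≤ 1)
    (hs : 0 ≤ s) (h : 2 - ε < ‖x + y‖) : (1 + s) * (1 - ε) ≤ ‖y + s • x‖ := by
  have hε : 0 < ε := by linarith [norm_add_le x y]
  rcases le_total s 1 with hs₁ | hs₁
  · calc (1 + s) * (1 - ε) ≤ ‖x + y‖ - (1 - s) * ‖x‖ := by nlinarith
      _ ≤ ‖(x + y) - (1 - s) • x‖ := by
          simpa [norm_smul, abs_of_nonneg (sub_nonneg.2 hs₁)] using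
            norm_sub_norm_le (x + y) ((1 - s) • x)
      _ = ‖y + s • x‖ := by congr 1; module
  · calc (1 + s) * (1 - ε) ≤ s * ‖x + y‖ - (s - 1) * ‖y‖ := by nlinarith
      _ ≤ ‖s • (x + y) - (s - 1) • y‖ := by
          simpa only [norm_smul, Real.norm_of_nonneg hs, Real.norm_of_nonneg (sub_nonneg.2 hs₁)]
            using norm_sub_norm_le (s • (x + y)) ((s - 1) • y)
      _ = ‖y + s • x‖ := by congr 1; module

lemma one_add_le_norm_id_add_smul_smulRight {x : X} {f : X →L[ℝ] ℝ} (hx : ‖x‖ = 1) {c : ℝ}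
    (hc : 0 ≤ c) (hslice : ∀ ε > 0, ∃ y : X, ‖y‖ ≤ 1 ∧ 1 - ε < f y ∧ 2 - ε < ‖x + y‖) :
    1 + c ≤ ‖ContinuousLinearMap.id ℝ X + c • f.smulRight x‖ := by
  have hlim : Tendsto (fun ε : ℝ ↦ (1 + c * (1 - ε)) * (1 - ε)) (𝓝[>] 0) (𝓝 (1 + c)) := by
    have hcont : Continuous fun ε : ℝ ↦ (1 + c * (1 - ε)) * (1 - ε) := by fun_prop
    simpa using (hcont.tendsto 0).mono_left nhdsWithin_le_nhds
  refine le_of_tendsto hlim ?_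
  filter_upwards [Ioo_mem_nhdsGT (show (0 : ℝ) < 1 by norm_num)] with ε ⟨hε₀, hε₁⟩
  obtain ⟨y, hy, hfy, hxy⟩ := hslice ε hε₀
  have hs : c * (1 - ε) ≤ c * f y := mul_le_mul_of_nonneg_left hfy.le hc
  calc (1 + c * (1 - ε)) * (1 - ε) ≤ (1 + c * f y) * (1 - ε) := by nlinarith
    _ ≤ ‖y + (c * f y) • x‖ :=
        mul_one_sub_le_norm_add_smul hx.le hy (by nlinarith) hxy
    _ = ‖(ContinuousLinearMap.id ℝ X + c • f.smulRight x) y‖ := by simp [smul_smul]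
    _ ≤ _ := ContinuousLinearMap.unit_le_opNorm _ y hy

lemma smulRight_eq_norm_mul_norm_smul_smulRight {g : X →L[ℝ] ℝ} {v : X} (hg : g ≠ 0)
    (hv : v ≠ 0) :
    g.smulRight v = (‖g‖ * ‖v‖) • (‖g‖⁻¹ • g).smulRight (‖v‖⁻¹ • v) := by
  ext y
  simp only [ContinuousLinearMap.smulRight_apply, smul_apply, smul_eq_mul, smul_smul]
  field_simp

lemma one_add_norm_le_norm_id_add_smulRight [Nontrivial X]
    (hslice : ∀ x : X, ‖x‖ = 1 → ∀ f : X →L[ℝ] ℝ, ‖f‖ = 1 → ∀ ε > 0,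
      ∃ y : X, ‖y‖ ≤ 1 ∧ 1 - ε < f y ∧ 2 - ε < ‖x + y‖)
    (g : X →L[ℝ] ℝ) (v : X) :
    1 + ‖g.smulRight v‖ ≤ ‖ContinuousLinearMap.id ℝ X + g.smulRight v‖ := by
  rcases eq_or_ne g 0 with rfl | hg
  · simp
  rcases eq_or_ne v 0 with rfl | hv
  · simp
  rw [ContinuousLinearMap.norm_smulRight_apply, smulRight_eq_norm_mul_norm_smul_smulRight hg hv]
  refine one_add_le_norm_id_add_smul_smulRight ?_ (by positivity) (hslice _ ?_ _ ?_)
  all_goals simp [norm_smul, hg, hv]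

end Daugavet

open Daugavet in
theorem stmt11_general {X : Type*} [NormedAddCommGroup X] [NormedSpace ℝ X]
    [Nontrivial X] :
    (∀ (g : X →L[ℝ] ℝ) (v : X),
        ‖ContinuousLinearMap.id ℝ X + g.smulRight v‖ = 1 + ‖g.smulRight v‖) ↔
      (∀ x : X, ‖x‖ = 1 → ∀ f : X →L[ℝ] ℝ, ‖f‖ = 1 → ∀ α : ℝ, 0 < α → ∀ ε : ℝ, 0 < ε →
        ∃ y : X, ‖y‖ ≤ 1 ∧ f y > 1 - α ∧ ‖x + y‖ > 2 - ε) := by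
  constructor
  · intro hD x hx f hf α hα ε hε
    have hnorm : ‖ContinuousLinearMap.id ℝ X + f.smulRight x‖ = 2 := by
      rw [hD, ContinuousLinearMap.norm_smulRight_apply, hf, hx]; norm_num
    obtain ⟨y, hy, hfy, hxy⟩ :=
      exists_slice_norm_add_gt hf hx hnorm (lt_min hα (half_pos hε))
    exact ⟨y, hy, by linarith [min_le_left α (ε / 2)], by linarith [min_le_right α (ε / 2)]⟩
  · intro hS g v
    exact (norm_id_add_le _).antisymm <| one_add_norm_le_norm_id_add_smulRight
      (fun x hx f hf ε hε ↦ hS x hx f hf ε hε ε hε) g v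

theorem stmt11 {X : Type*} [NormedAddCommGroup X] [NormedSpace ℝ X] [CompleteSpace X]
    [Nontrivial X] :
    (∀ (g : X →L[ℝ] ℝ) (v : X),
        ‖ContinuousLinearMap.id ℝ X + g.smulRight v‖ = 1 + ‖g.smulRight v‖) ↔
      (∀ x : X, ‖x‖ = 1 → ∀ f : X →L[ℝ] ℝ, ‖f‖ = 1 → ∀ α : ℝ, 0 < α → ∀ ε : ℝ, 0 < ε →
        ∃ y : X, ‖y‖ ≤ 1 ∧ f y > 1 - α ∧ ‖x + y‖ > 2 - ε) :=
  stmt11_general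
end

section
/- Let X be a Banach space satisfying: for every x, y ∈ B_X and every ε > 0 there exists a net {y_s} ⊆ (1+ε)B_X converging weakly to y with ‖x + y_s‖ ≥ 2 − ε for all s. Then for every x ∈ S_X, every slice S(B_X, f, α) with f ∈ S_{X*} and α > 0, and every ε > 0, there exists y in the slice with ‖x + y‖ > 2 − ε. -/
open Metric Set Filter

/-!
Pick `z` in the slice with the margin `f z > 1 - α / 2` and apply the hypothesis to `x` and `z`
with a small `δ`. Testing the weak convergence against `f` itself, some `ys i` still satisfies
`f (ys i) > 1 - α / 2`. It lies in `(1 + δ) B_X`, so it is within `δ` of a point `w` of `B_X`;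
moving from `ys i` to `w` costs at most `δ` both in `f` (as `‖f‖ = 1`) and in `‖x + ·‖`.
-/

theorem ContinuousLinearMap.exists_norm_lt_one_lt_apply {E : Type*} [NormedAddCommGroup E]
    [NormedSpace ℝ E] (f : E →L[ℝ] ℝ) {r : ℝ} (hr : r < ‖f‖) : ∃ z : E, ‖z‖ < 1 ∧ r < f z := by
  obtain ⟨y, hy, hfy⟩ := f.exists_lt_apply_of_lt_opNorm hr
  rw [Real.norm_eq_abs, lt_abs] at hfy
  rcases hfy with hpos | hneg
  · exact ⟨y, hy, hpos⟩
  · exact ⟨-y, by rwa [norm_neg], by rwa [map_neg]⟩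

theorem exists_norm_le_one_norm_sub_le {E : Type*} [SeminormedAddCommGroup E] [NormedSpace ℝ E]
    {δ : ℝ} (hδ : 0 ≤ δ) {v : E} (hv : ‖v‖ ≤ 1 + δ) : ∃ w : E, ‖w‖ ≤ 1 ∧ ‖v - w‖ ≤ δ := by
  have hpos : 0 < 1 + δ := by linarith
  refine ⟨(1 + δ)⁻¹ • v, ?_, ?_⟩
  · rw [norm_smul, norm_inv, Real.norm_of_nonneg hpos.le]
    exact inv_mul_le_one_of_le₀ hv hpos.le
  · have hscale : v - (1 + δ)⁻¹ • v = (δ / (1 + δ)) • v := by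
      rw [show δ / (1 + δ) = 1 - (1 + δ)⁻¹ by field_simp; ring, sub_smul, one_smul]
    rw [hscale, norm_smul, Real.norm_of_nonneg (by positivity)]
    calc δ / (1 + δ) * ‖v‖ ≤ δ / (1 + δ) * (1 + δ) := by gcongr
      _ = δ := div_mul_cancel₀ δ hpos.ne'

theorem stmt13_general {X : Type*} [NormedAddCommGroup X] [NormedSpace ℝ X]
    (h : ∀ x ∈ closedBall (0 : X) 1, ∀ y ∈ closedBall (0 : X) 1, ∀ ε : ℝ, 0 < ε →
      ∃ (ι : Type) (l : Filter ι) (ys : ι → X), l.NeBot ∧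
        (∀ i, ‖ys i‖ ≤ 1 + ε) ∧ (∀ i, 2 - ε ≤ ‖x + ys i‖) ∧
        ∀ f : X →L[ℝ] ℝ, Tendsto (fun i => f (ys i)) l (nhds (f y))) :
    ∀ x : X, ‖x‖ = 1 → ∀ f : X →L[ℝ] ℝ, ‖f‖ = 1 → ∀ α : ℝ, 0 < α → ∀ ε : ℝ, 0 < ε →
      ∃ y : X, ‖y‖ ≤ 1 ∧ f y > 1 - α ∧ ‖x + y‖ > 2 - ε := by
  intro x hx f hf α hα ε hε
  set δ := min (ε / 3) (α / 2)
  have hδ : 0 < δ := lt_min (by positivity) (by positivity)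
  obtain ⟨z, hz, hfz⟩ := f.exists_norm_lt_one_lt_apply (r := 1 - α / 2) (by linarith)
  obtain ⟨ι, l, ys, hl, hys, hnear, hweak⟩ :=
    h x (mem_closedBall_zero_iff.2 hx.le) z (mem_closedBall_zero_iff.2 hz.le) δ hδ
  obtain ⟨i, hfi⟩ := ((hweak f).eventually (eventually_gt_nhds hfz)).exists
  obtain ⟨w, hw, hdist⟩ := exists_norm_le_one_norm_sub_le hδ.le (hys i)
  have hfw : f (ys i) - f w ≤ δ :=
    calc f (ys i) - f w = f (ys i - w) := (map_sub f _ _).symm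
      _ ≤ ‖f‖ * ‖ys i - w‖ := (le_abs_self _).trans (f.le_opNorm _)
      _ ≤ δ := by rw [hf, one_mul]; exact hdist
  have hxw : ‖x + ys i‖ - ‖x + w‖ ≤ δ :=
    calc ‖x + ys i‖ - ‖x + w‖ ≤ ‖(x + ys i) - (x + w)‖ := norm_sub_norm_le _ _
      _ ≤ δ := by rwa [add_sub_add_left_eq_sub]
  have hδε : δ ≤ ε / 3 := min_le_left _ _
  have hδα : δ ≤ α / 2 := min_le_right _ _
  exact ⟨w, hw, by linarith, by linarith [hnear i]⟩

theorem stmt13 {X : Type*} [NormedAddCommGroup X] [NormedSpace ℝ X] [CompleteSpace X]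
    (h : ∀ x ∈ closedBall (0 : X) 1, ∀ y ∈ closedBall (0 : X) 1, ∀ ε : ℝ, 0 < ε →
      ∃ (ι : Type) (l : Filter ι) (ys : ι → X), l.NeBot ∧
        (∀ i, ‖ys i‖ ≤ 1 + ε) ∧ (∀ i, 2 - ε ≤ ‖x + ys i‖) ∧
        ∀ f : X →L[ℝ] ℝ, Tendsto (fun i => f (ys i)) l (nhds (f y))) :
    ∀ x : X, ‖x‖ = 1 → ∀ f : X →L[ℝ] ℝ, ‖f‖ = 1 → ∀ α : ℝ, 0 < α → ∀ ε : ℝ, 0 < ε →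
      ∃ y : X, ‖y‖ ≤ 1 ∧ f y > 1 - α ∧ ‖x + y‖ > 2 - ε :=
  stmt13_general h
end

section
/- Let M be a geodesic metric space, f : M → ℝ a Lipschitz function with Lipschitz constant > c for some c > 0. Then there exist infinitely many points a ∈ M such that for every δ > 0, the restriction of f to the closed ball B(a, δ) has Lipschitz constant > c. More precisely, the set of such points a is infinite whenever M is geodesic (hence has no isolated points relevant to the construction) and ‖f‖_Lip > c. -/
open Metric Set

/-!
Along a geodesic `α` from `x` to `y` with `f y - f x > c · d(x, y)`, the function
`φ t = f (α t) - c t` satisfies `φ 0 < φ L`. At a point where `φ` is not locally non-increasing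
to the right, `f` has slope `> c` at arbitrarily small scales. If there were only finitely many
such points, `φ` would be antitone on `[0, L]`: the Dini-derivative comparison theorem handles
the good points, and continuity of `φ` absorbs each of the finitely many exceptions.
-/

open Filter Topology

theorem antitoneOn_Icc_of_eventually_le_nhdsGT {φ : ℝ → ℝ} {a b : ℝ}
    (hφ : ContinuousOn φ (Icc a b)) (h : ∀ x ∈ Ico a b, ∀ᶠ z in 𝓝[>] x, φ z ≤ φ x) :
    AntitoneOn φ (Icc a b) := by
  intro u hu v hv huv
  refine image_le_of_liminf_slope_right_le_deriv_boundary (B := fun _ => φ u) (B' := fun _ => 0)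
    (hφ.mono (Icc_subset_Icc hu.1 hv.2)) le_rfl continuousOn_const
    (fun _ _ => hasDerivWithinAt_const _ _ _) (fun x hx r hr => ?_) ⟨huv, le_rfl⟩
  have hx' : x ∈ Ico a b := ⟨hu.1.trans hx.1, hx.2.trans_le hv.2⟩
  refine Eventually.frequently ?_
  filter_upwards [h x hx', self_mem_nhdsWithin] with z hz (hxz : x < z)
  rw [slope_def_field]
  exact (div_nonpos_of_nonpos_of_nonneg (sub_nonpos.mpr hz) (sub_pos.mpr hxz).le).trans_lt hr

theorem antitoneOn_Icc_of_eventually_le_nhdsGT_off_finset {φ : ℝ → ℝ} (F : Finset ℝ) {a b : ℝ}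
    (hφ : ContinuousOn φ (Icc a b)) (h : ∀ x ∈ Ico a b, x ∉ F → ∀ᶠ z in 𝓝[>] x, φ z ≤ φ x) :
    AntitoneOn φ (Icc a b) := by
  induction F using Finset.induction_on generalizing a b with
  | empty => exact antitoneOn_Icc_of_eventually_le_nhdsGT hφ fun x hx => h x hx (by simp)
  | insert s F _ ih =>
    refine ih hφ fun x hx hxF => ?_
    rcases eq_or_ne x s with rfl | hxs
    · -- `φ` is antitone on every `[t, b]` with `x < t`, and continuity at `x` lets `t → x⁺`.
      have hcont : Tendsto φ (𝓝[>] x) (𝓝 (φ x)) :=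
        (hφ x (Ico_subset_Icc_self hx)).mono_of_mem_nhdsWithin (Icc_mem_nhdsGT_of_mem hx)
      filter_upwards [Ioc_mem_nhdsGT hx.2] with z hz
      refine ge_of_tendsto hcont ?_
      filter_upwards [Ioc_mem_nhdsGT hz.1] with t ht
      have hanti : AntitoneOn φ (Icc t b) :=
        ih (hφ.mono (Icc_subset_Icc (hx.1.trans ht.1.le) le_rfl)) fun w hw hwF =>
          h w ⟨hx.1.trans (ht.1.trans_le hw.1).le, hw.2⟩
            (by simp [hwF, (ht.1.trans_le hw.1).ne'])
      exact hanti ⟨le_rfl, ht.2.trans hz.2⟩ ⟨ht.2, hz.2⟩ ht.2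
    · exact h x hx (by simp [hxs, hxF])

theorem infinite_setOf_frequently_lt_nhdsGT {φ : ℝ → ℝ} {a b : ℝ} (hab : a ≤ b)
    (hφ : ContinuousOn φ (Icc a b)) (hlt : φ a < φ b) :
    {x ∈ Ico a b | ∃ᶠ z in 𝓝[>] x, φ x < φ z}.Infinite := by
  intro hfin
  refine hlt.not_ge <| antitoneOn_Icc_of_eventually_le_nhdsGT_off_finset hfin.toFinset hφ
    (fun x hx hxF => ?_) ⟨le_rfl, hab⟩ ⟨hab, le_rfl⟩ hab
  have hnfr : ¬∃ᶠ z in 𝓝[>] x, φ x < φ z := fun hfr => hxF (hfin.mem_toFinset.mpr ⟨hx, hfr⟩)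
  simpa only [not_frequently, not_lt] using hnfr

theorem infinite_setOf_local_slope_gt_of_segment {M : Type*} [MetricSpace M] {f : M → ℝ}
    (hf : Continuous f) {c L : ℝ} (hL : 0 ≤ L) {α : ℝ → M}
    (hα : ∀ s ∈ Icc 0 L, ∀ t ∈ Icc 0 L, dist (α s) (α t) = |s - t|)
    (hlt : c * L < f (α L) - f (α 0)) :
    {a : M | ∀ δ : ℝ, 0 < δ →
      ∃ x ∈ closedBall a δ, ∃ y ∈ closedBall a δ, c * dist x y < |f x - f y|}.Infinite := by
  have hαIso : Isometry ((Icc 0 L).domRestrict α) :=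
    Isometry.of_dist_eq fun s t => (hα s s.2 t t.2).trans (Real.dist_eq s t).symm
  set φ : ℝ → ℝ := fun t => f (α t) - c * t
  have hφ : ContinuousOn φ (Icc 0 L) :=
    (hf.comp_continuousOn (continuousOn_iff_continuous_domRestrict.mpr hαIso.continuous)).sub
      (continuousOn_const.mul continuousOn_id)
  have hφlt : φ 0 < φ L := by simp only [φ]; linarith
  refine ((infinite_setOf_frequently_lt_nhdsGT hL hφ hφlt).image
    ((injOn_iff_injective.mpr hαIso.injective).mono fun s hs => Ico_subset_Icc_self hs.1)).mono ?_
  rintro _ ⟨s, ⟨hs, hfr⟩, rfl⟩ δ hδ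
  obtain ⟨z, hφz, hsz, hzδ⟩ := (hfr.and_eventually
    (Ioo_mem_nhdsGT (lt_min (lt_add_of_pos_right s hδ) hs.2))).exists
  have hsI : s ∈ Icc 0 L := Ico_subset_Icc_self hs
  have hzI : z ∈ Icc 0 L := ⟨hs.1.trans hsz.le, hzδ.le.trans (min_le_right _ _)⟩
  have hdist : dist (α z) (α s) = z - s := by rw [hα z hzI s hsI, abs_of_pos (sub_pos.mpr hsz)]
  refine ⟨α s, mem_closedBall_self hδ.le, α z, ?_, ?_⟩
  · rw [mem_closedBall, hdist]
    linarith [min_le_left (s + δ) L]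
  · calc c * dist (α s) (α z) = c * (z - s) := by rw [dist_comm, hdist]
      _ < f (α z) - f (α s) := by simp only [φ] at hφz; linarith
      _ ≤ |f (α s) - f (α z)| := abs_sub_comm (f (α s)) (f (α z)) ▸ le_abs_self _

theorem stmt17_general {M : Type*} [MetricSpace M] (hgeo : IsGeodesicSpace M)
    (f : M → ℝ) (K : NNReal) (hf : LipschitzWith K f) (c : ℝ)
    (hgt : ∃ x y : M, c * dist x y < |f x - f y|) :
    {a : M | ∀ δ : ℝ, 0 < δ →
      ∃ x ∈ closedBall a δ, ∃ y ∈ closedBall a δ, c * dist x y < |f x - f y|}.Infinite := by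
  obtain ⟨x, y, hxy⟩ : ∃ x y : M, c * dist x y < f y - f x := by
    obtain ⟨x, y, h⟩ := hgt
    rcases lt_abs.mp h with h | h
    · exact ⟨y, x, by rwa [dist_comm]⟩
    · exact ⟨x, y, by linarith⟩
  have hne : x ≠ y := by rintro rfl; simp at hxy
  obtain ⟨α, hα0, hαL, hα⟩ := hgeo x y hne
  exact infinite_setOf_local_slope_gt_of_segment hf.continuous dist_nonneg hα
    (by rwa [hα0, hαL])

theorem stmt17 {M : Type*} [MetricSpace M] (hgeo : IsGeodesicSpace M)
    (f : M → ℝ) (K : NNReal) (hf : LipschitzWith K f) (c : ℝ) (hc : 0 < c)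
    (hgt : ∃ x y : M, c * dist x y < |f x - f y|) :
    {a : M | ∀ δ : ℝ, 0 < δ →
      ∃ x ∈ closedBall a δ, ∃ y ∈ closedBall a δ, c * dist x y < |f x - f y|}.Infinite :=
  stmt17_general hgeo f K hf c hgt
end

section
/- Let X be a Banach space with the Daugavet property. Then the norm of X is octahedral: for every ε > 0 and every finite set x₁,…,x_n ∈ S_X there exists y ∈ S_X such that ‖x_i + λy‖ ≥ (1−ε)(1 + |λ|) for all i and all scalars λ ≥ 0. -/
open Metric Set

/-
A Daugavet space is octahedral because of Kadets–Shvidkoy–Sirotkin–Werner's slice lemma: inside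
every slice of the unit ball and for every unit vector `x` there is a smaller slice all of whose
points `y` satisfy `‖x + y‖ > 2 - δ`. Applying the Daugavet identity to the rank-one operator
`f ⊗ x` gives a functional `φ` of norm at most one, with `φ x ≥ 0`, such that `‖φ + φ x • f‖` is
almost `2`; the slice cut out by `φ + φ x • f` at height almost `2` is the smaller slice, since on
it `φ x`, `φ y` and `f y` are all almost `1`. Iterating over `x₁, …, xₙ` and taking a unit vector
`y` in the last slice gives `‖xᵢ + y‖ ≥ 2 - ε`, and then `‖xᵢ + λ y‖ ≥ (1 - ε)(1 + λ)` by the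
triangle inequality.
-/

section

variable {X : Type*} [NormedAddCommGroup X] [NormedSpace ℝ X]

variable (X) in
def DaugavetProperty : Prop :=
  ∀ (g : StrongDual ℝ X) (v : X),
    ‖ContinuousLinearMap.id ℝ X + g.smulRight v‖ = 1 + ‖g.smulRight v‖

def slice (f : StrongDual ℝ X) (c : ℝ) : Set X := {y | ‖y‖ ≤ 1 ∧ c < f y}

def ContainsSlice (S : Set X) : Prop :=
  ∃ f : StrongDual ℝ X, ‖f‖ = 1 ∧ ∃ c < 1, slice f c ⊆ S

theorem ContinuousLinearMap.apply_le_of_norm_le_one (f : StrongDual ℝ X) {y : X} (hy : ‖y‖ ≤ 1) :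
    f y ≤ ‖f‖ :=
  (le_abs_self _).trans (f.unit_le_opNorm y hy)

theorem ContinuousLinearMap.exists_norm_eq_one_lt_apply (f : StrongDual ℝ X) {r : ℝ} (hr₀ : 0 ≤ r)
    (hr : r < ‖f‖) : ∃ y : X, ‖y‖ = 1 ∧ r < f y := by
  lift r to NNReal using hr₀
  obtain ⟨y, hy, hry⟩ := f.exists_nnnorm_eq_one_lt_apply_of_lt_opNNNorm (r := r) hr
  have hy : ‖y‖ = 1 := congrArg NNReal.toReal hy
  have hry : (r : ℝ) < |f y| := hry
  rcases lt_abs.mp hry with hpos | hneg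
  · exact ⟨y, hy, hpos⟩
  · exact ⟨-y, by rwa [norm_neg], by rwa [map_neg]⟩

theorem slice_eq_slice_smul (f : StrongDual ℝ X) (c : ℝ) {r : ℝ} (hr : 0 < r) :
    slice f c = slice (r • f) (r * c) := by
  ext y
  simp only [slice, mem_ofPred_eq, smul_apply, smul_eq_mul, mul_lt_mul_iff_right₀ hr]

theorem ContainsSlice.mono {S T : Set X} (hS : ContainsSlice S) (hST : S ⊆ T) :
    ContainsSlice T := by
  obtain ⟨f, hf, c, hc, hfS⟩ := hS
  exact ⟨f, hf, c, hc, hfS.trans hST⟩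

theorem containsSlice_univ [Nontrivial X] : ContainsSlice (univ : Set X) := by
  obtain ⟨u, hu⟩ := exists_ne (0 : X)
  obtain ⟨f, hf, -⟩ := exists_dual_vector ℝ u (norm_ne_zero_iff.mpr hu)
  exact ⟨f, hf, 0, zero_lt_one, subset_univ _⟩

theorem containsSlice_of_slice_subset {S : Set X} {h : StrongDual ℝ X} {c : ℝ} (hc : 0 ≤ c)
    (hch : c < ‖h‖) (hS : slice h c ⊆ S) : ContainsSlice S := by
  have hh : 0 < ‖h‖ := hc.trans_lt hch
  refine ⟨‖h‖⁻¹ • h, norm_smul_inv_norm (norm_pos_iff.mp hh), ‖h‖⁻¹ * c, ?_, ?_⟩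
  · rwa [inv_mul_lt_one₀ hh]
  · rwa [← slice_eq_slice_smul h c (inv_pos.mpr hh)]

theorem ContainsSlice.exists_norm_eq_one_mem {S : Set X} (hS : ContainsSlice S) :
    ∃ y ∈ S, ‖y‖ = 1 := by
  obtain ⟨f, hf, c, hc, hfS⟩ := hS
  obtain ⟨y, hy, hcy⟩ := f.exists_norm_eq_one_lt_apply (le_max_right c 0) (by simpa [hf])
  exact ⟨y, hfS ⟨hy.le, (le_max_left c 0).trans_lt hcy⟩, hy⟩

theorem slice_subset_of_apply_nonneg {x : X} {f φ : StrongDual ℝ X} {η : ℝ} (hx : ‖x‖ ≤ 1)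
    (hf : ‖f‖ ≤ 1) (hφ : ‖φ‖ ≤ 1) (hφx : 0 ≤ φ x) (hη : η ≤ 1) :
    slice (φ + φ x • f) (2 - η) ⊆ slice f (1 - η) ∩ {y | 2 - 2 * η < ‖x + y‖} := by
  rintro y ⟨hy, hgy⟩
  have hgy : 2 - η < φ y + φ x * f y := by simpa using hgy
  have hφy_le := (φ.apply_le_of_norm_le_one hy).trans hφ
  have hφx_le := (φ.apply_le_of_norm_le_one hx).trans hφ
  have hfy_le := (f.apply_le_of_norm_le_one hy).trans hf
  have hfy_pos : 0 < f y := by nlinarith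
  refine ⟨⟨hy, by nlinarith⟩, ?_⟩
  calc 2 - 2 * η < φ (x + y) := by rw [map_add]; nlinarith
    _ ≤ ‖φ‖ * ‖x + y‖ := (le_abs_self _).trans (φ.le_opNorm _)
    _ ≤ ‖x + y‖ := mul_le_of_le_one_left (norm_nonneg _) hφ

namespace DaugavetProperty

theorem nontrivial (hD : DaugavetProperty X) : Nontrivial X := by
  have hid : ‖ContinuousLinearMap.id ℝ X‖ = 1 := by simpa using hD 0 0
  by_contra hX
  rw [not_nontrivial_iff_subsingleton] at hX
  simp [Subsingleton.elim (ContinuousLinearMap.id ℝ X) 0] at hid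

/-- The Daugavet identity for the adjoint `φ ↦ φ + φ x • f` of `f ⊗ x`, tested on a functional
norming `(I + f ⊗ x) w`; the sign of `φ x` is free since `-φ` gives the negated functional. -/
theorem exists_apply_nonneg_lt_norm_add_smul (hD : DaugavetProperty X) {x : X} (hx : ‖x‖ = 1)
    {f : StrongDual ℝ X} (hf : ‖f‖ = 1) {η : ℝ} (hη : 0 < η) :
    ∃ φ : StrongDual ℝ X, ‖φ‖ ≤ 1 ∧ 0 ≤ φ x ∧ 2 - η < ‖φ + φ x • f‖ := by
  have hT : ‖ContinuousLinearMap.id ℝ X + f.smulRight x‖ = 2 := by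
    rw [hD, ContinuousLinearMap.norm_smulRight_apply, hf, hx]; norm_num
  obtain ⟨w, hw, hwT⟩ :=
    (ContinuousLinearMap.id ℝ X + f.smulRight x).exists_lt_apply_of_lt_opNorm
      (hT.symm ▸ sub_lt_self 2 hη : 2 - η < _)
  obtain ⟨φ, hφ, hφw⟩ := exists_dual_vector'' ℝ (w + f w • x)
  have hnorm : 2 - η < ‖φ + φ x • f‖ := by
    calc 2 - η < ‖w + f w • x‖ := by simpa using hwT
      _ = φ (w + f w • x) := by simpa using hφw.symm
      _ = (φ + φ x • f) w := by simp [mul_comm]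
      _ ≤ ‖φ + φ x • f‖ := (φ + φ x • f).apply_le_of_norm_le_one hw.le
  rcases le_or_gt 0 (φ x) with hφx | hφx
  · exact ⟨φ, hφ, hφx, hnorm⟩
  · refine ⟨-φ, by rwa [norm_neg], by simp [hφx.le], ?_⟩
    have hneg : -φ + (-φ) x • f = -(φ + φ x • f) := by ext; simp; ring
    rwa [hneg, norm_neg]

theorem containsSlice_inter (hD : DaugavetProperty X) {S : Set X} (hS : ContainsSlice S) {x : X}
    (hx : ‖x‖ = 1) {δ : ℝ} (hδ : 0 < δ) : ContainsSlice (S ∩ {y | 2 - δ < ‖x + y‖}) := by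
  obtain ⟨f, hf, c, hc, hfS⟩ := hS
  obtain ⟨η, hη, hη1, hηc, hηδ⟩ : ∃ η : ℝ, 0 < η ∧ η ≤ 1 ∧ η ≤ 1 - c ∧ 2 * η ≤ δ :=
    ⟨min (min 1 (1 - c)) (δ / 2), by positivity, by grind, by grind, by grind⟩
  obtain ⟨φ, hφ, hφx, hnorm⟩ := hD.exists_apply_nonneg_lt_norm_add_smul hx hf hη
  refine containsSlice_of_slice_subset (by linarith) hnorm ?_
  refine (slice_subset_of_apply_nonneg hx.le hf.le hφ hφx hη1).trans ?_
  rintro y ⟨⟨hy, hfy⟩, hxy : 2 - 2 * η < ‖x + y‖⟩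
  exact ⟨hfS ⟨hy, by linarith⟩, show 2 - δ < ‖x + y‖ by linarith⟩

theorem containsSlice_inter_forall (hD : DaugavetProperty X) {S : Set X} (hS : ContainsSlice S)
    {δ : ℝ} (hδ : 0 < δ) (s : Finset X) (hs : ∀ x ∈ s, ‖x‖ = 1) :
    ContainsSlice (S ∩ {y | ∀ x ∈ s, 2 - δ < ‖x + y‖}) := by
  classical
  induction s using Finset.induction_on with
  | empty => exact hS.mono fun y hy => ⟨hy, by simp⟩
  | insert a s _ ih =>
    refine (hD.containsSlice_inter (ih fun x hx => hs x (by simp [hx])) (hs a (by simp))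
      hδ).mono ?_
    rintro y ⟨⟨hyS, hys⟩, hya⟩
    exact ⟨hyS, Finset.forall_mem_insert _ _ _ |>.mpr ⟨hya, hys⟩⟩

end DaugavetProperty

theorem one_sub_mul_one_add_le_norm_add_smul {x y : X} (hx : ‖x‖ ≤ 1) (hy : ‖y‖ ≤ 1) {η : ℝ}
    (hη : 0 ≤ η) (hxy : 2 - η ≤ ‖x + y‖) {lam : ℝ} (hlam : 0 ≤ lam) :
    (1 - η) * (1 + lam) ≤ ‖x + lam • y‖ := by
  rcases le_total lam 1 with hl | hl
  · have h := norm_sub_norm_le (x + y) ((1 - lam) • y)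
    rw [norm_smul, Real.norm_of_nonneg (by linarith)] at h
    rw [show x + y - (1 - lam) • y = x + lam • y by module] at h
    nlinarith [mul_le_of_le_one_right (by linarith : 0 ≤ 1 - lam) hy, mul_nonneg hη hlam]
  · have h := norm_sub_norm_le (lam • (x + y)) ((lam - 1) • x)
    rw [norm_smul, norm_smul, Real.norm_of_nonneg hlam, Real.norm_of_nonneg (by linarith)] at h
    rw [show lam • (x + y) - (lam - 1) • x = x + lam • y by module] at h
    nlinarith [mul_le_of_le_one_right (by linarith : 0 ≤ lam - 1) hx,
      mul_le_mul_of_nonneg_left hxy hlam]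

end

theorem stmt18_general {X : Type*} [NormedAddCommGroup X] [NormedSpace ℝ X]
    (hD : ∀ (g : X →L[ℝ] ℝ) (v : X),
      ‖ContinuousLinearMap.id ℝ X + g.smulRight v‖ = 1 + ‖g.smulRight v‖) :
    ∀ ε : ℝ, 0 < ε → ∀ (n : ℕ) (x : Fin n → X), (∀ i, ‖x i‖ = 1) →
      ∃ y : X, ‖y‖ = 1 ∧ ∀ i, ∀ lam : ℝ, 0 ≤ lam →
        (1 - ε) * (1 + lam) ≤ ‖x i + lam • y‖ := by
  classical
  intro ε hε n x hx
  have hD : DaugavetProperty X := hD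
  have := hD.nontrivial
  obtain ⟨y, ⟨-, hy⟩, hy1⟩ := (hD.containsSlice_inter_forall containsSlice_univ hε
    (Finset.univ.image x) (by simpa using hx)).exists_norm_eq_one_mem
  exact ⟨y, hy1, fun i lam hlam => one_sub_mul_one_add_le_norm_add_smul (hx i).le hy1.le hε.le
    (hy (x i) (by simp)).le hlam⟩

theorem stmt18 {X : Type*} [NormedAddCommGroup X] [NormedSpace ℝ X] [CompleteSpace X]
    (hD : ∀ (g : X →L[ℝ] ℝ) (v : X),
      ‖ContinuousLinearMap.id ℝ X + g.smulRight v‖ = 1 + ‖g.smulRight v‖) :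
    ∀ ε : ℝ, 0 < ε → ∀ (n : ℕ) (x : Fin n → X), (∀ i, ‖x i‖ = 1) →
      ∃ y : X, ‖y‖ = 1 ∧ ∀ i, ∀ lam : ℝ, 0 ≤ lam →
        (1 - ε) * (1 + lam) ≤ ‖x i + lam • y‖ :=
  stmt18_general hD
end
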